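/- arXiv:2509.22619 — 6 statements merged into one kernel-verified Lean document; each statement's English description precedes it below -/
import Mathlib

section
/- For every integer k ≥ 2 and all positive integers m and n, M_k(mn) ≤ binomial(mn + m − 1, m − 1) · M_k(n)^m. -/
/-- `numOcc v w` is the number of occurrences of `v` as a subsequence of `w`, i.e. the
number of strictly increasing maps `f : Fin |v| → Fin |w|` with `v⟨i⟩ = w⟨f i⟩`. -/
noncomputable def numOcc {α : Type*} (v w : List α) : ℕ :=
  Nat.card {f : Fin v.length → Fin w.length //
    StrictMono f ∧ ∀ i : Fin v.length, v.get i = w.get (f i)}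

/-- `maxOcc w = M(w)`, the maximum over all words `v` of `numOcc v w`. -/
noncomputable def maxOcc {α : Type*} (w : List α) : ℕ :=
  sSup {m | ∃ v : List α, numOcc v w = m}

/-- `Mmin k n = M_k(n)`, the minimum of `M(w)` over all words `w` of length `n`
over a `k`-letter alphabet. -/
noncomputable def Mmin (k n : ℕ) : ℕ :=
  sInf {m | ∃ w : List (Fin k), w.length = n ∧ maxOcc w = m}

section Aux

variable {α : Type*}

/-- The type of occurrences of `v` as a subsequence of `w`. -/
def OccT (v w : List α) :=
  {f : Fin v.length → Fin w.length //
    StrictMono f ∧ ∀ i : Fin v.length, v.get i = w.get (f i)}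

lemma numOcc_eq (v w : List α) : numOcc v w = Nat.card (OccT v w) := rfl

instance (v w : List α) : Finite (OccT v w) := by
  unfold OccT; infer_instance

lemma card_sigma_fin {n : ℕ} (f : Fin n → Type*) [∀ i, Finite (f i)] :
    Nat.card (Σ i, f i) = ∑ i, Nat.card (f i) := by
  classical
  letI : ∀ i, Fintype (f i) := fun i => Fintype.ofFinite _
  simp [Nat.card_eq_fintype_card]

lemma numOcc_eq_zero (v w : List α) (h : w.length < v.length) : numOcc v w = 0 := by
  rw [numOcc_eq]
  have : IsEmpty (OccT v w) := ⟨fun F => by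
    have := Fintype.card_le_of_injective F.1 F.2.1.injective
    simp only [Fintype.card_fin] at this
    omega⟩
  exact Nat.card_of_isEmpty

lemma numOcc_le_pow (v w : List α) : numOcc v w ≤ (w.length + 1) ^ w.length := by
  rcases le_or_gt v.length w.length with h | h
  · calc numOcc v w ≤ Nat.card (Fin v.length → Fin w.length) :=
          Nat.card_le_card_of_injective Subtype.val Subtype.val_injective
      _ = w.length ^ v.length := by simp [Nat.card_eq_fintype_card]
      _ ≤ (w.length + 1) ^ v.length := Nat.pow_le_pow_left (by omega) _
      _ ≤ (w.length + 1) ^ w.length := Nat.pow_le_pow_right (by omega) h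
  · rw [numOcc_eq_zero v w h]; exact Nat.zero_le _

lemma bddAbove_numOcc (w : List α) : BddAbove {m | ∃ v : List α, numOcc v w = m} := by
  refine ⟨(w.length + 1) ^ w.length, ?_⟩
  rintro x ⟨v, rfl⟩
  exact numOcc_le_pow v w

lemma numOcc_le_maxOcc (v w : List α) : numOcc v w ≤ maxOcc w :=
  le_csSup (bddAbove_numOcc w) ⟨v, rfl⟩

lemma sub_bound {W A B : ℕ} (x : Fin W) (hW : W = A + B) (hx : A ≤ (x : ℕ)) :
    (x : ℕ) - A < B := by
  have := x.isLt
  omega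

section Split

variable {v a b : List α}

/-- The index at which an occurrence of `v` in `a ++ b` switches from `a` to `b`. -/
def splitIdx (F : OccT v (a ++ b)) : ℕ :=
  if h : (Finset.univ.filter (fun j : Fin v.length => a.length ≤ (F.1 j : ℕ))).Nonempty
  then (((Finset.univ.filter (fun j : Fin v.length => a.length ≤ (F.1 j : ℕ))).min' h :
    Fin v.length) : ℕ)
  else v.length

lemma splitIdx_le (F : OccT v (a ++ b)) : splitIdx F ≤ v.length := by
  unfold splitIdx
  split_ifs with h
  · exact (Fin.is_lt _).le
  · exact le_rfl

lemma lt_of_lt_splitIdx (F : OccT v (a ++ b)) (j : Fin v.length)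
    (h : (j : ℕ) < splitIdx F) : (F.1 j : ℕ) < a.length := by
  by_contra h'
  push_neg at h'
  have hj : j ∈ Finset.univ.filter (fun j : Fin v.length => a.length ≤ (F.1 j : ℕ)) := by
    simp [h']
  have hne : (Finset.univ.filter (fun j : Fin v.length => a.length ≤ (F.1 j : ℕ))).Nonempty :=
    ⟨j, hj⟩
  rw [splitIdx, dif_pos hne] at h
  have := Finset.min'_le _ j hj
  rw [Fin.le_def] at this
  omega

lemma le_splitIdx_le (F : OccT v (a ++ b)) (j : Fin v.length)
    (h : splitIdx F ≤ (j : ℕ)) : a.length ≤ (F.1 j : ℕ) := by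
  rw [splitIdx] at h
  split_ifs at h with hne
  · have hmem := Finset.min'_mem
      (Finset.univ.filter (fun j : Fin v.length => a.length ≤ (F.1 j : ℕ))) hne
    have hA : a.length ≤ (F.1 (Finset.min' _ hne) : ℕ) := (Finset.mem_filter.mp hmem).2
    have hmono := F.2.1.monotone (show Finset.min' _ hne ≤ j from h)
    rw [Fin.le_def] at hmono
    exact le_trans hA hmono
  · exact absurd j.isLt (by omega)

/-- Splitting an occurrence of `v` in `a ++ b` at index `i = splitIdx F`. -/
def toPair (i : ℕ) (F : OccT v (a ++ b)) (hF : splitIdx F = i) :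
    OccT (v.take i) a × OccT (v.drop i) b :=
  ⟨⟨fun j => ⟨(F.1 ⟨(j : ℕ), by
        have h1 : (v.take i).length = min i v.length := List.length_take
        have h2 := j.isLt
        omega⟩ : ℕ), by
      apply lt_of_lt_splitIdx F
      rw [hF]
      show (j : ℕ) < i
      have h1 : (v.take i).length = min i v.length := List.length_take
      have h2 := j.isLt
      omega⟩, by
    constructor
    · intro j j' hjj'
      simp only [Fin.mk_lt_mk]
      exact F.2.1 hjj'
    · intro j
      have hjL : (j : ℕ) < v.length := by
        have h1 : (v.take i).length = min i v.length := List.length_take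
        have h2 := j.isLt
        omega
      have hlt : (F.1 ⟨(j : ℕ), hjL⟩ : ℕ) < a.length := by
        apply lt_of_lt_splitIdx F
        rw [hF]
        show (j : ℕ) < i
        have h1 : (v.take i).length = min i v.length := List.length_take
        have h2 := j.isLt
        omega
      have h1 := F.2.2 ⟨(j : ℕ), hjL⟩
      simp only [List.get_eq_getElem] at h1 ⊢
      rw [List.getElem_take]
      rw [List.getElem_append_left hlt] at h1
      exact h1⟩,
   ⟨fun j => ⟨(F.1 ⟨i + (j : ℕ), by
        have h1 : (v.drop i).length = v.length - i := List.length_drop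
        have h2 := j.isLt
        omega⟩ : ℕ) - a.length,
      sub_bound _ (List.length_append : (a ++ b).length = a.length + b.length)
        (le_splitIdx_le F _ (by
          show splitIdx F ≤ i + (j : ℕ)
          rw [hF]
          omega))⟩, by
    constructor
    · intro j j' hjj'
      simp only [Fin.mk_lt_mk]
      refine Nat.sub_lt_sub_right ?_ ?_
      · refine le_splitIdx_le F _ ?_
        show splitIdx F ≤ i + (j : ℕ)
        rw [hF]
        omega
      · exact F.2.1 (show (⟨i + (j : ℕ), _⟩ : Fin v.length) < ⟨i + (j' : ℕ), _⟩ from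
          Nat.add_lt_add_left hjj' i)
    · intro j
      have hjL : i + (j : ℕ) < v.length := by
        have h1 : (v.drop i).length = v.length - i := List.length_drop
        have h2 := j.isLt
        omega
      have hge : a.length ≤ (F.1 ⟨i + (j : ℕ), hjL⟩ : ℕ) := by
        refine le_splitIdx_le F _ ?_
        show splitIdx F ≤ i + (j : ℕ)
        rw [hF]
        omega
      have h1 := F.2.2 ⟨i + (j : ℕ), hjL⟩
      simp only [List.get_eq_getElem] at h1 ⊢
      rw [List.getElem_drop]
      rw [List.getElem_append_right hge] at h1
      exact h1⟩⟩

lemma toPair_inj (i : ℕ) (F G : OccT v (a ++ b)) (hF : splitIdx F = i) (hG : splitIdx G = i)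
    (h : toPair i F hF = toPair i G hG) : F = G := by
  have hiL : i ≤ v.length := hF ▸ splitIdx_le F
  apply Subtype.ext
  funext j
  apply Fin.ext
  by_cases hj : (j : ℕ) < i
  · have hj' : (j : ℕ) < (v.take i).length := by
      have h1 : (v.take i).length = min i v.length := List.length_take
      omega
    have e := congrArg (fun p : OccT (v.take i) a × OccT (v.drop i) b =>
      ((p.1.1 ⟨(j : ℕ), hj'⟩ : Fin a.length) : ℕ)) h
    exact e
  · push_neg at hj
    have hj' : (j : ℕ) - i < (v.drop i).length := by
      have h1 : (v.drop i).length = v.length - i := List.length_drop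
      have h2 := j.isLt
      omega
    have e := congrArg (fun p : OccT (v.take i) a × OccT (v.drop i) b =>
      ((p.2.1 ⟨(j : ℕ) - i, hj'⟩ : Fin b.length) : ℕ)) h
    have pf : i + ((j : ℕ) - i) < v.length := by
      have := j.isLt
      omega
    have eF : (F.1 ⟨i + ((j : ℕ) - i), pf⟩ : ℕ) - a.length
        = (G.1 ⟨i + ((j : ℕ) - i), pf⟩ : ℕ) - a.length := e
    have hgeF : a.length ≤ (F.1 ⟨i + ((j : ℕ) - i), pf⟩ : ℕ) := by
      refine le_splitIdx_le F _ ?_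
      show splitIdx F ≤ i + ((j : ℕ) - i)
      rw [hF]
      omega
    have hgeG : a.length ≤ (G.1 ⟨i + ((j : ℕ) - i), pf⟩ : ℕ) := by
      refine le_splitIdx_le G _ ?_
      show splitIdx G ≤ i + ((j : ℕ) - i)
      rw [hG]
      omega
    have heq : (F.1 ⟨i + ((j : ℕ) - i), pf⟩ : ℕ) = (G.1 ⟨i + ((j : ℕ) - i), pf⟩ : ℕ) := by
      omega
    have hjeq : (⟨i + ((j : ℕ) - i), pf⟩ : Fin v.length) = j :=
      Fin.ext (show i + ((j : ℕ) - i) = (j : ℕ) by omega)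
    rw [hjeq] at heq
    exact heq

lemma numOcc_append_le (v a b : List α) :
    numOcc v (a ++ b) ≤
      ∑ i : Fin (v.length + 1), numOcc (v.take (i : ℕ)) a * numOcc (v.drop (i : ℕ)) b := by
  classical
  set g : OccT v (a ++ b) → Fin (v.length + 1) :=
    fun F => ⟨splitIdx F, Nat.lt_succ_of_le (splitIdx_le F)⟩ with hg
  calc numOcc v (a ++ b) = Nat.card (OccT v (a ++ b)) := rfl
    _ = Nat.card (Σ i : Fin (v.length + 1), {F : OccT v (a ++ b) // g F = i}) :=
        (Nat.card_congr (Equiv.sigmaFiberEquiv g)).symm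
    _ = ∑ i : Fin (v.length + 1), Nat.card {F : OccT v (a ++ b) // g F = i} :=
        card_sigma_fin _
    _ ≤ ∑ i : Fin (v.length + 1), numOcc (v.take (i : ℕ)) a * numOcc (v.drop (i : ℕ)) b := by
        apply Finset.sum_le_sum
        intro i _
        rw [numOcc_eq, numOcc_eq, ← Nat.card_prod]
        have hmap : ∀ F : {F : OccT v (a ++ b) // g F = i}, splitIdx F.1 = (i : ℕ) := by
          intro F
          have := congrArg Fin.val F.2
          simpa [hg] using this
        exact Nat.card_le_card_of_injective
          (fun F => toPair (i : ℕ) F.1 (hmap F))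
          (fun F G h => Subtype.ext (toPair_inj _ _ _ _ _ h))

end Split

lemma hockey (c : ℕ) : ∀ L : ℕ,
    ∑ j ∈ Finset.range (L + 1), (j + c).choose c = (L + c + 1).choose (c + 1)
  | 0 => by simp
  | L + 1 => by
    rw [Finset.sum_range_succ, hockey c L]
    have h1 : (L + 1 + c + 1).choose (c + 1)
        = (L + c + 1).choose c + (L + c + 1).choose (c + 1) := by
      have h0 : L + 1 + c + 1 = (L + c + 1) + 1 := by omega
      rw [h0, Nat.choose_succ_succ']
    rw [h1]
    have h2 : (L + 1 + c) = L + c + 1 := by omega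
    rw [h2]
    omega

lemma key (w : List α) : ∀ (s : ℕ) (v : List α),
    numOcc v ((List.replicate (s + 1) w).flatten) ≤
      (v.length + s).choose s * maxOcc w ^ (s + 1)
  | 0, v => by
    simpa using numOcc_le_maxOcc v w
  | s + 1, v => by
    rw [List.replicate_succ, List.flatten_cons]
    refine le_trans (numOcc_append_le v w _) ?_
    calc ∑ i : Fin (v.length + 1),
          numOcc (v.take (i : ℕ)) w *
            numOcc (v.drop (i : ℕ)) ((List.replicate (s + 1) w).flatten)
        ≤ ∑ i : Fin (v.length + 1),
            maxOcc w * (((v.length - (i : ℕ)) + s).choose s * maxOcc w ^ (s + 1)) := by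
          apply Finset.sum_le_sum
          intro i _
          refine Nat.mul_le_mul (numOcc_le_maxOcc _ _) ?_
          have := key w s (v.drop (i : ℕ))
          rwa [List.length_drop] at this
      _ = (∑ i : Fin (v.length + 1), ((v.length - (i : ℕ)) + s).choose s)
            * maxOcc w ^ (s + 2) := by
          rw [Finset.sum_mul]
          apply Finset.sum_congr rfl
          intro i _
          ring
      _ = (v.length + (s + 1)).choose (s + 1) * maxOcc w ^ (s + 2) := by
          congr 1
          rw [Fin.sum_univ_eq_sum_range (fun i => ((v.length - i) + s).choose s) (v.length + 1)]
          calc ∑ i ∈ Finset.range (v.length + 1), ((v.length - i) + s).choose s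
              = ∑ i ∈ Finset.range (v.length + 1), ((v.length + 1 - 1 - i) + s).choose s := by
                simp
            _ = ∑ j ∈ Finset.range (v.length + 1), (j + s).choose s :=
                Finset.sum_range_reflect (fun j => (j + s).choose s) (v.length + 1)
            _ = (v.length + s + 1).choose (s + 1) := hockey s v.length
            _ = (v.length + (s + 1)).choose (s + 1) := by rw [Nat.add_assoc]

end Aux

/-- For every `k ≥ 2` and all positive integers `m, n`:
`M_k(mn) ≤ C(mn + m - 1, m - 1) · M_k(n)^m`. -/
theorem stmt3 (k m n : ℕ) (hk : 2 ≤ k) (hm : 0 < m) (hn : 0 < n) :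
    Mmin k (m * n) ≤ (m * n + m - 1).choose (m - 1) * Mmin k n ^ m := by
  obtain ⟨t, rfl⟩ : ∃ t, m = t + 1 := ⟨m - 1, by omega⟩
  have hne : {x | ∃ w : List (Fin k), w.length = n ∧ maxOcc w = x}.Nonempty :=
    ⟨maxOcc (List.replicate n (⟨0, by omega⟩ : Fin k)),
      List.replicate n _, List.length_replicate, rfl⟩
  have hmem : Mmin k n ∈ {x | ∃ w : List (Fin k), w.length = n ∧ maxOcc w = x} :=
    Nat.sInf_mem hne
  obtain ⟨w, hwlen, hwmax⟩ := hmem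
  set W := (List.replicate (t + 1) w).flatten with hW
  have hWlen : W.length = (t + 1) * n := by
    simp [hW, List.length_flatten, List.map_replicate, List.sum_replicate, hwlen, smul_eq_mul]
  have h1 : Mmin k ((t + 1) * n) ≤ maxOcc W := Nat.sInf_le ⟨W, hWlen, rfl⟩
  refine h1.trans ?_
  show sSup {x | ∃ v : List (Fin k), numOcc v W = x} ≤ _
  apply csSup_le
  · exact ⟨numOcc [] W, [], rfl⟩
  rintro x ⟨v, rfl⟩
  rcases le_or_gt v.length ((t + 1) * n) with hL | hL
  · calc numOcc v W ≤ (v.length + t).choose t * maxOcc w ^ (t + 1) := key w t v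
      _ ≤ ((t + 1) * n + t).choose t * maxOcc w ^ (t + 1) :=
          Nat.mul_le_mul_right _ (Nat.choose_le_choose _ (by omega))
      _ = ((t + 1) * n + (t + 1) - 1).choose ((t + 1) - 1) * Mmin k n ^ (t + 1) := by
          rw [hwmax]
          congr 2 <;> omega
  · rw [numOcc_eq_zero v W (by omega)]
    exact Nat.zero_le _
end

section
/- Let Σ be a finite set and let π₁, π₂, π₃ be permutations of Σ, i.e., words of length |Σ| in which each symbol of Σ occurs exactly once. Then LCS(π₁,π₂) · LCS(π₁,π₃) · LCS(π₂,π₃) ≥ |Σ|. -/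
/-- `LCS ws` is the length of a longest word that is a subsequence of every word in `ws`. -/
noncomputable def LCS {α : Type*} (ws : List (List α)) : ℕ :=
  sSup {L | ∃ x : List α, (∀ w ∈ ws, x.Sublist w) ∧ x.length = L}

section aux
variable {α : Type*} [DecidableEq α]

/-- Extension lemma: a sublist ending at `x` can be extended by a later element `y`. -/
lemma ext_lemma {π : List α} (hnd : π.Nodup) {l : List α} {x y : α}
    (hsub : (l ++ [x]).Sublist π) (hy : y ∈ π)
    (hlt : π.idxOf x < π.idxOf y) :
    (l ++ [x, y]).Sublist π := by
  induction π generalizing l with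
  | nil => simp at hy
  | cons a π' ih =>
    have hnd' : π'.Nodup := hnd.of_cons
    have hanotin : a ∉ π' := (List.nodup_cons.mp hnd).1
    by_cases hax : a = x
    · subst hax
      -- l must be []
      have hnodup : (l ++ [a]).Nodup := hsub.nodup hnd
      have hxl : a ∉ l := by
        intro h
        have := List.disjoint_of_nodup_append hnodup h
        simp at this
      have hl : l = [] := by
        rcases List.sublist_cons_iff.mp hsub with h | ⟨r, hr, hrs⟩
        · exact absurd (h.subset (by simp)) hanotin
        · cases l with
          | nil => rfl
          | cons b l' =>
            simp only [List.cons_append, List.cons.injEq] at hr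
            exact absurd (hr.1 ▸ (List.mem_cons_self (a := b) (l := l'))) hxl
      subst hl
      have hya : y ≠ a := by
        intro h; subst h
        simp [List.idxOf_cons_self] at hlt
      have hy' : y ∈ π' := by
        rcases List.mem_cons.mp hy with h | h
        · exact absurd h hya
        · exact h
      simpa using (List.singleton_sublist.mpr hy' : [y].Sublist π').cons₂ a
    · have hax' : a ≠ x := hax
      have hya : y ≠ a := by
        intro h; subst h
        simp [List.idxOf_cons_self] at hlt
      have hy' : y ∈ π' := by
        rcases List.mem_cons.mp hy with h | h
        · exact absurd h hya
        · exact h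
      have hlt' : π'.idxOf x < π'.idxOf y := by
        rw [List.idxOf_cons_ne _ hax', List.idxOf_cons_ne _ (Ne.symm hya)] at hlt
        exact Nat.succ_lt_succ_iff.mp hlt
      rcases List.sublist_cons_iff.mp hsub with h | ⟨r, hr, hrs⟩
      · exact (ih hnd' h hy' hlt').cons a
      · cases l with
        | nil =>
          simp only [List.nil_append, List.cons.injEq] at hr
          exact absurd hr.1.symm hax'
        | cons b l' =>
          simp only [List.cons_append, List.cons.injEq] at hr
          obtain ⟨hb, hl'⟩ := hr
          rw [hb]
          have : (l' ++ [x]).Sublist π' := hl' ▸ hrs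
          simpa using (ih hnd' this hy' hlt').cons₂ a

/-- rank of `x`: length of longest common subsequence of `π`, `ρ` ending at `x`. -/
noncomputable def rk (π ρ : List α) (x : α) : ℕ :=
  sSup {k | ∃ l : List α, (l ++ [x]).Sublist π ∧ (l ++ [x]).Sublist ρ ∧ l.length + 1 = k}

lemma rkSet_bddAbove (π ρ : List α) (x : α) :
    BddAbove {k | ∃ l : List α, (l ++ [x]).Sublist π ∧ (l ++ [x]).Sublist ρ ∧ l.length + 1 = k} := by
  refine ⟨π.length, ?_⟩
  rintro k ⟨l, h1, _, rfl⟩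
  have := h1.length_le
  simpa using this

lemma rkSet_nonempty {π ρ : List α} {x : α} (hxπ : x ∈ π) (hxρ : x ∈ ρ) :
    Set.Nonempty {k | ∃ l : List α, (l ++ [x]).Sublist π ∧ (l ++ [x]).Sublist ρ ∧ l.length + 1 = k} :=
  ⟨1, [], by simpa using List.singleton_sublist.mpr hxπ,
    by simpa using List.singleton_sublist.mpr hxρ, rfl⟩

lemma one_le_rk {π ρ : List α} {x : α} (hxπ : x ∈ π) (hxρ : x ∈ ρ) : 1 ≤ rk π ρ x :=
  le_csSup (rkSet_bddAbove π ρ x)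
    ⟨[], by simpa using List.singleton_sublist.mpr hxπ,
      by simpa using List.singleton_sublist.mpr hxρ, rfl⟩

lemma rk_le_LCS (π ρ : List α) (x : α) (hne : x ∈ π) (hxρ : x ∈ ρ) :
    rk π ρ x ≤ LCS [π, ρ] := by
  apply csSup_le_csSup
  · refine ⟨π.length, ?_⟩
    rintro k ⟨w, hw, rfl⟩
    exact (hw π (by simp)).length_le
  · exact rkSet_nonempty hne hxρ
  · rintro k ⟨l, h1, h2, rfl⟩
    exact ⟨l ++ [x], by intro w hw; rcases List.mem_pair.mp hw with rfl | rfl <;> assumption,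
      by simp⟩

lemma rk_lt {π ρ : List α} (hπ : π.Nodup) (hρ : ρ.Nodup) {x y : α}
    (hyπ : y ∈ π) (hyρ : y ∈ ρ) (hxπ : x ∈ π) (hxρ : x ∈ ρ)
    (h1 : π.idxOf x < π.idxOf y) (h2 : ρ.idxOf x < ρ.idxOf y) :
    rk π ρ x < rk π ρ y := by
  have hmem := Nat.sSup_mem (rkSet_nonempty hxπ hxρ) (rkSet_bddAbove π ρ x)
  obtain ⟨l, hl1, hl2, hlen⟩ := hmem
  have e1 : (l ++ [x, y]) = (l ++ [x]) ++ [y] := by simp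
  have h1' : ((l ++ [x]) ++ [y]).Sublist π := e1 ▸ ext_lemma hπ hl1 hyπ h1
  have h2' : ((l ++ [x]) ++ [y]).Sublist ρ := e1 ▸ ext_lemma hρ hl2 hyρ h2
  have : rk π ρ x + 1 ≤ rk π ρ y := by
    apply le_csSup (rkSet_bddAbove π ρ y)
    exact ⟨l ++ [x], h1', h2', by simp [rk, ← hlen]⟩
  omega

lemma rk_ne {π ρ : List α} (hπ : π.Nodup) (hρ : ρ.Nodup) {x y : α}
    (hyπ : y ∈ π) (hyρ : y ∈ ρ) (hxπ : x ∈ π) (hxρ : x ∈ ρ) (hxy : x ≠ y)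
    (hiff : (π.idxOf x < π.idxOf y ↔ ρ.idxOf x < ρ.idxOf y)) :
    rk π ρ x ≠ rk π ρ y := by
  have hιπ : π.idxOf x ≠ π.idxOf y := fun h => hxy (by
    have := List.idxOf_inj hxπ |>.mp h; exact this)
  have hιρ : ρ.idxOf x ≠ ρ.idxOf y := fun h => hxy (by
    have := List.idxOf_inj hxρ |>.mp h; exact this)
  rcases lt_or_gt_of_ne hιπ with h | h
  · exact (rk_lt hπ hρ hyπ hyρ hxπ hxρ h (hiff.mp h)).ne
  · have h2 : ρ.idxOf y < ρ.idxOf x := by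
      rcases lt_or_gt_of_ne hιρ with h' | h'
      · exact absurd (hiff.mpr h') (by omega)
      · exact h'
    exact (rk_lt hπ hρ hxπ hxρ hyπ hyρ h h2).ne'

end aux

/-- If `π₁, π₂, π₃` are permutations of a finite set `S` (words of length `|S|` in which
each symbol of `S` occurs exactly once), then
`LCS(π₁,π₂) · LCS(π₁,π₃) · LCS(π₂,π₃) ≥ |S|`. -/
theorem stmt7 {α : Type*} [DecidableEq α] (S : Finset α) (π₁ π₂ π₃ : List α)
    (h₁ : π₁.Nodup ∧ π₁.toFinset = S)
    (h₂ : π₂.Nodup ∧ π₂.toFinset = S)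
    (h₃ : π₃.Nodup ∧ π₃.toFinset = S) :
    S.card ≤ LCS [π₁, π₂] * LCS [π₁, π₃] * LCS [π₂, π₃] := by
  obtain ⟨hn1, hS1⟩ := h₁
  obtain ⟨hn2, hS2⟩ := h₂
  obtain ⟨hn3, hS3⟩ := h₃
  have m1 : ∀ x ∈ S, x ∈ π₁ := fun x hx => by rw [← hS1] at hx; simpa using hx
  have m2 : ∀ x ∈ S, x ∈ π₂ := fun x hx => by rw [← hS2] at hx; simpa using hx
  have m3 : ∀ x ∈ S, x ∈ π₃ := fun x hx => by rw [← hS3] at hx; simpa using hx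
  set F : α → ℕ × ℕ × ℕ := fun x => (rk π₁ π₂ x, rk π₁ π₃ x, rk π₂ π₃ x) with hF
  have hinj : Set.InjOn F ↑S := by
    intro x hx y hy hxy
    by_contra hne
    simp only [Finset.mem_coe] at hx hy
    have b1 := fun h => rk_ne hn1 hn2 (m1 y hy) (m2 y hy) (m1 x hx) (m2 x hx) hne h
    have b2 := fun h => rk_ne hn1 hn3 (m1 y hy) (m3 y hy) (m1 x hx) (m3 x hx) hne h
    have b3 := fun h => rk_ne hn2 hn3 (m2 y hy) (m3 y hy) (m2 x hx) (m3 x hx) hne h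
    have e1 : rk π₁ π₂ x = rk π₁ π₂ y := congrArg Prod.fst hxy
    have e2 : rk π₁ π₃ x = rk π₁ π₃ y := congrArg (fun p => p.2.1) hxy
    have e3 : rk π₂ π₃ x = rk π₂ π₃ y := congrArg (fun p => p.2.2) hxy
    have i1 : ¬(π₁.idxOf x < π₁.idxOf y ↔ π₂.idxOf x < π₂.idxOf y) :=
      fun h => b1 h e1
    have i2 : ¬(π₁.idxOf x < π₁.idxOf y ↔ π₃.idxOf x < π₃.idxOf y) :=
      fun h => b2 h e2
    have i3 : ¬(π₂.idxOf x < π₂.idxOf y ↔ π₃.idxOf x < π₃.idxOf y) :=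
      fun h => b3 h e3
    -- not (iff) for all three pairs; but among three props, two agree
    by_cases p1 : π₁.idxOf x < π₁.idxOf y <;>
    by_cases p2 : π₂.idxOf x < π₂.idxOf y <;>
    by_cases p3 : π₃.idxOf x < π₃.idxOf y <;>
    [exact i1 ⟨fun _ => p2, fun _ => p1⟩; exact i1 ⟨fun _ => p2, fun _ => p1⟩;
     exact i2 ⟨fun _ => p3, fun _ => p1⟩; exact i3 ⟨fun h => absurd h p2, fun h => absurd h p3⟩;
     exact i3 ⟨fun _ => p3, fun _ => p2⟩; exact i2 ⟨fun h => absurd h p1, fun h => absurd h p3⟩;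
     exact i1 ⟨fun h => absurd h p1, fun h => absurd h p2⟩;
     exact i1 ⟨fun h => absurd h p1, fun h => absurd h p2⟩]
  have hmaps : ∀ x ∈ S, F x ∈
      (Finset.Icc 1 (LCS [π₁, π₂])) ×ˢ (Finset.Icc 1 (LCS [π₁, π₃])) ×ˢ
        (Finset.Icc 1 (LCS [π₂, π₃])) := by
    intro x hx
    simp only [Finset.mem_product, Finset.mem_Icc, hF]
    exact ⟨⟨one_le_rk (m1 x hx) (m2 x hx), rk_le_LCS _ _ _ (m1 x hx) (m2 x hx)⟩,
      ⟨one_le_rk (m1 x hx) (m3 x hx), rk_le_LCS _ _ _ (m1 x hx) (m3 x hx)⟩,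
      ⟨one_le_rk (m2 x hx) (m3 x hx), rk_le_LCS _ _ _ (m2 x hx) (m3 x hx)⟩⟩
  have := Finset.card_le_card_of_injOn F hmaps hinj
  simpa [Finset.card_product, Nat.card_Icc, mul_assoc] using this
end

section
/- There exists r₀ such that the following holds for every integer r ≥ r₀ and every positive integer k divisible by r². If π₁, …, π_{2r²+r} are words over the alphabet [k] = {1,…,k}, each of length k/r², such that each π_i is a permutation of some (k/r²)-element subset of [k], then there exist indices i < j < ℓ with LCS(π_i,π_j) · LCS(π_i,π_ℓ) · LCS(π_j,π_ℓ) ≥ k/r⁸. -/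
set_option linter.unusedSectionVars false


section basics
variable {α : Type*} [DecidableEq α]

lemma lcs_set_nonempty (u v : List α) :
    {L | ∃ x : List α, (∀ w ∈ [u,v], x.Sublist w) ∧ x.length = L}.Nonempty :=
  ⟨0, [], by simp⟩

lemma lcs_set_bdd (u v : List α) :
    BddAbove {L | ∃ x : List α, (∀ w ∈ [u,v], x.Sublist w) ∧ x.length = L} := by
  refine ⟨u.length, ?_⟩
  rintro L ⟨x, hx, rfl⟩
  exact (hx u (by simp)).length_le

lemma exists_lcs (u v : List α) :
    ∃ x : List α, x.Sublist u ∧ x.Sublist v ∧ x.length = LCS [u,v] := by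
  have h := Nat.sSup_mem (lcs_set_nonempty u v) (lcs_set_bdd u v)
  obtain ⟨x, hx, hl⟩ := h
  exact ⟨x, hx u (by simp), hx v (by simp), hl⟩

lemma le_lcs {u v x : List α} (h1 : x.Sublist u) (h2 : x.Sublist v) :
    x.length ≤ LCS [u,v] := by
  refine le_csSup (lcs_set_bdd u v) ⟨x, ?_, rfl⟩
  intro w hw
  simp at hw
  rcases hw with rfl | rfl
  · exact h1
  · exact h2

lemma take_indexOf_append {u : List α} {x : α} (hx : x ∈ u) :
    u.take (u.idxOf x) ++ [x] = u.take (u.idxOf x + 1) := by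
  have h := List.idxOf_lt_length_iff.2 hx
  rw [List.take_succ]
  congr 1
  rw [List.getElem?_eq_getElem h]
  simp [List.idxOf_get h]

noncomputable def ell (u v : List α) (x : α) : ℕ :=
  1 + LCS [u.take (u.idxOf x), v.take (v.idxOf x)]

lemma one_le_ell (u v : List α) (x : α) : 1 ≤ ell u v x := Nat.le_add_right 1 _

lemma sub_aux {u : List α} {x : α} {s : List α} (hs : s.Sublist (u.take (u.idxOf x)))
    (hx : x ∈ u) {n : ℕ} (hn : u.idxOf x < n) : (s ++ [x]).Sublist (u.take n) := by
  have h1 : (s ++ [x]).Sublist (u.take (u.idxOf x) ++ [x]) :=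
    hs.append (List.Sublist.refl [x])
  rw [take_indexOf_append hx] at h1
  have h2 : (u.take n).take (u.idxOf x + 1) = u.take (u.idxOf x + 1) := by
    rw [List.take_take, min_eq_left hn]
  exact h1.trans (h2 ▸ List.take_sublist _ _)

lemma ell_le {u v : List α} {x : α} (hxu : x ∈ u) (hxv : x ∈ v) :
    ell u v x ≤ LCS [u, v] := by
  obtain ⟨s, hsu, hsv, hlen⟩ := exists_lcs (u.take (u.idxOf x)) (v.take (v.idxOf x))
  have h1 : (s ++ [x]).Sublist u := by
    have := sub_aux hsu hxu (n := u.length) (List.idxOf_lt_length_iff.2 hxu)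
    rwa [List.take_length] at this
  have h2 : (s ++ [x]).Sublist v := by
    have := sub_aux hsv hxv (n := v.length) (List.idxOf_lt_length_iff.2 hxv)
    rwa [List.take_length] at this
  have := le_lcs h1 h2
  simp only [List.length_append, List.length_singleton] at this
  simp only [ell, hlen]
  omega

lemma ell_lt {u v : List α} {x y : α} (hxu : x ∈ u) (hxv : x ∈ v)
    (hu : u.idxOf x < u.idxOf y) (hv : v.idxOf x < v.idxOf y) :
    ell u v x < ell u v y := by
  obtain ⟨s, hsu, hsv, hlen⟩ := exists_lcs (u.take (u.idxOf x)) (v.take (v.idxOf x))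
  have h1 := sub_aux hsu hxu hu
  have h2 := sub_aux hsv hxv hv
  have := le_lcs h1 h2
  simp only [List.length_append, List.length_singleton] at this
  simp only [ell, hlen]
  omega

lemma indexOf_ne {u : List α} {x y : α} (hx : x ∈ u) (hy : y ∈ u) (hxy : x ≠ y) :
    u.idxOf x ≠ u.idxOf y := by
  intro h
  apply hxy
  have h1 := List.idxOf_get (List.idxOf_lt_length_iff.2 hx)
  have h2 := List.idxOf_get (List.idxOf_lt_length_iff.2 hy)
  rw [← h1, ← h2]
  exact congrArg u.get (Fin.ext h)

lemma ell_ne {u v : List α} {x y : α} (hxu : x ∈ u) (hxv : x ∈ v) (hyu : y ∈ u)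
    (hyv : y ∈ v) (hxy : x ≠ y)
    (hagree : (u.idxOf x < u.idxOf y) ↔ (v.idxOf x < v.idxOf y)) :
    ell u v x ≠ ell u v y := by
  by_cases h : u.idxOf x < u.idxOf y
  · exact (ell_lt hxu hxv h (hagree.1 h)).ne
  · have h' : u.idxOf y < u.idxOf x :=
      lt_of_le_of_ne (not_lt.1 h) (indexOf_ne hyu hxu hxy.symm)
    have h2' : v.idxOf y < v.idxOf x := by
      have := mt hagree.2 h
      exact lt_of_le_of_ne (not_lt.1 this) (indexOf_ne hyv hxv hxy.symm)
    exact (ell_lt hyu hyv h' h2').ne'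

lemma card_inter_le (u v w : List α) :
    (u.toFinset ∩ v.toFinset ∩ w.toFinset).card ≤ LCS [u,v] * LCS [u,w] * LCS [v,w] := by
  classical
  have hmap : ∀ x ∈ u.toFinset ∩ v.toFinset ∩ w.toFinset,
      (ell u v x, ell u w x, ell v w x) ∈
        (Finset.Icc 1 (LCS [u,v])) ×ˢ ((Finset.Icc 1 (LCS [u,w])) ×ˢ (Finset.Icc 1 (LCS [v,w]))) := by
    intro x hx
    simp only [Finset.mem_inter, List.mem_toFinset] at hx
    obtain ⟨⟨h1, h2⟩, h3⟩ := hx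
    simp only [Finset.mem_product, Finset.mem_Icc]
    exact ⟨⟨one_le_ell _ _ _, ell_le h1 h2⟩, ⟨one_le_ell _ _ _, ell_le h1 h3⟩,
      ⟨one_le_ell _ _ _, ell_le h2 h3⟩⟩
  have hinj : Set.InjOn (fun x => (ell u v x, ell u w x, ell v w x))
      (u.toFinset ∩ v.toFinset ∩ w.toFinset : Finset α) := by
    intro x hx y hy heq
    simp only [Finset.coe_inter, Set.mem_inter_iff, Finset.mem_coe, List.mem_toFinset] at hx hy
    obtain ⟨⟨hxu, hxv⟩, hxw⟩ := hx
    obtain ⟨⟨hyu, hyv⟩, hyw⟩ := hy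
    by_contra hxy
    simp only [Prod.mk.injEq] at heq
    obtain ⟨e1, e2, e3⟩ := heq
    by_cases huv : (u.idxOf x < u.idxOf y) ↔ (v.idxOf x < v.idxOf y)
    · exact ell_ne hxu hxv hyu hyv hxy huv e1
    by_cases huw : (u.idxOf x < u.idxOf y) ↔ (w.idxOf x < w.idxOf y)
    · exact ell_ne hxu hxw hyu hyw hxy huw e2
    have hvw : (v.idxOf x < v.idxOf y) ↔ (w.idxOf x < w.idxOf y) := by tauto
    exact ell_ne hxv hxw hyv hyw hxy hvw e3
  have := Finset.card_le_card_of_injOn _ hmap hinj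
  simpa [Nat.card_Icc, mul_assoc] using this


lemma triple_count {n : ℕ} (A : Finset (Fin n)) :
    A.card ≤ (Finset.univ.filter (fun p : Fin n × Fin n × Fin n =>
      (p.1 < p.2.1 ∧ p.2.1 < p.2.2) ∧ p.1 ∈ A ∧ p.2.1 ∈ A ∧ p.2.2 ∈ A)).card + 2 := by
  by_cases hA : 3 ≤ A.card
  · have hA0 : A.Nonempty := Finset.card_pos.1 (by omega)
    set a0 := A.min' hA0 with ha0
    have ha0A : a0 ∈ A := A.min'_mem hA0
    have hA1 : (A.erase a0).Nonempty := by
      rw [← Finset.card_pos, Finset.card_erase_of_mem ha0A]; omega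
    set a1 := (A.erase a0).min' hA1 with ha1
    have ha1A' : a1 ∈ A.erase a0 := (A.erase a0).min'_mem hA1
    have ha1A : a1 ∈ A := Finset.mem_of_mem_erase ha1A'
    have h01 : a0 < a1 :=
      lt_of_le_of_ne (A.min'_le a1 ha1A) (Finset.ne_of_mem_erase ha1A').symm
    have hcard : ((A.erase a0).erase a1).card = A.card - 2 := by
      rw [Finset.card_erase_of_mem ha1A', Finset.card_erase_of_mem ha0A]; omega
    have hle : ((A.erase a0).erase a1).card ≤
        (Finset.univ.filter (fun p : Fin n × Fin n × Fin n =>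
          (p.1 < p.2.1 ∧ p.2.1 < p.2.2) ∧ p.1 ∈ A ∧ p.2.1 ∈ A ∧ p.2.2 ∈ A)).card := by
      apply Finset.card_le_card_of_injOn (fun c => (a0, a1, c))
      · intro c hc
        have hc1 : c ∈ A.erase a0 := Finset.mem_of_mem_erase hc
        have hcA : c ∈ A := Finset.mem_of_mem_erase hc1
        have h1c : a1 < c :=
          lt_of_le_of_ne ((A.erase a0).min'_le c hc1) (Finset.ne_of_mem_erase hc).symm
        simp only [Finset.coe_filter, Set.mem_setOf_eq, Finset.mem_filter, Finset.mem_univ, true_and]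
        exact ⟨⟨h01, h1c⟩, ha0A, ha1A, hcA⟩
      · intro c _ c' _ h
        simpa using h
    omega
  · omega


/-- There exists `r₀` such that for every `r ≥ r₀` and every positive `k` divisible by `r²`:
if `π₁, …, π_{2r²+r}` are words over `[k]`, each a permutation of some `(k/r²)`-element
subset of `[k]` (i.e. with no repeated letters and of length `k/r²`), then some triple
`i < j < ℓ` satisfies `LCS(πᵢ,πⱼ)·LCS(πᵢ,π_ℓ)·LCS(πⱼ,π_ℓ) ≥ k/r⁸`. -/
theorem stmt8 :
    ∃ r₀ : ℕ, ∀ r : ℕ, r₀ ≤ r → ∀ k : ℕ, 0 < k → r ^ 2 ∣ k →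
      ∀ π : Fin (2 * r ^ 2 + r) → List (Fin k),
        (∀ i, (π i).Nodup ∧ (π i).length = k / r ^ 2) →
        ∃ i j l : Fin (2 * r ^ 2 + r), i < j ∧ j < l ∧
          (k : ℝ) / (r : ℝ) ^ 8 ≤
            ((LCS [π i, π j] * LCS [π i, π l] * LCS [π j, π l] : ℕ) : ℝ) := by
  classical
  use 27
  intro r hr k hk hdvd π hπ
  obtain ⟨m, hm⟩ := hdvd
  have hr2 : 0 < r ^ 2 := by positivity
  have hmdef : k / r ^ 2 = m := by rw [hm]; exact Nat.mul_div_cancel_left m hr2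
  have hr2' : 27 ^ 2 ≤ r ^ 2 := Nat.pow_le_pow_left hr 2
  have hn3 : 3 ≤ 2 * r ^ 2 + r := by omega
  set T : Finset (Fin (2 * r ^ 2 + r) × Fin (2 * r ^ 2 + r) × Fin (2 * r ^ 2 + r)) :=
    Finset.univ.filter (fun p => p.1 < p.2.1 ∧ p.2.1 < p.2.2) with hTdef
  set com : Fin (2 * r ^ 2 + r) × Fin (2 * r ^ 2 + r) × Fin (2 * r ^ 2 + r) → Finset (Fin k) :=
    fun p => (π p.1).toFinset ∩ (π p.2.1).toFinset ∩ (π p.2.2).toFinset with hcom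
  -- double counting
  have key : ∑ p ∈ T, (com p).card =
      ∑ x : Fin k, (T.filter (fun p => x ∈ com p)).card := by
    have h1 : ∀ p, (com p).card = ∑ x : Fin k, if x ∈ com p then 1 else 0 := by
      intro p
      rw [← Finset.card_filter]
      congr 1
      ext x
      simp
    calc ∑ p ∈ T, (com p).card
        = ∑ p ∈ T, ∑ x : Fin k, if x ∈ com p then 1 else 0 :=
          Finset.sum_congr rfl (fun p _ => h1 p)
      _ = ∑ x : Fin k, ∑ p ∈ T, if x ∈ com p then 1 else 0 := Finset.sum_comm
      _ = ∑ x : Fin k, (T.filter (fun p => x ∈ com p)).card :=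
          Finset.sum_congr rfl (fun x _ => (Finset.card_filter _ _).symm)
  -- each letter bound
  have hmu : ∀ x : Fin k, (Finset.univ.filter (fun i : Fin (2 * r ^ 2 + r) => x ∈ π i)).card ≤
      (T.filter (fun p => x ∈ com p)).card + 2 := by
    intro x
    have htc := triple_count (Finset.univ.filter (fun i : Fin (2 * r ^ 2 + r) => x ∈ π i))
    have heq : T.filter (fun p => x ∈ com p) =
        Finset.univ.filter (fun p : Fin (2 * r ^ 2 + r) × Fin (2 * r ^ 2 + r) × Fin (2 * r ^ 2 + r) =>
          (p.1 < p.2.1 ∧ p.2.1 < p.2.2) ∧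
          p.1 ∈ Finset.univ.filter (fun i : Fin (2 * r ^ 2 + r) => x ∈ π i) ∧
          p.2.1 ∈ Finset.univ.filter (fun i : Fin (2 * r ^ 2 + r) => x ∈ π i) ∧
          p.2.2 ∈ Finset.univ.filter (fun i : Fin (2 * r ^ 2 + r) => x ∈ π i)) := by
      rw [hTdef, Finset.filter_filter]
      apply Finset.filter_congr
      intro p _
      simp [hcom, and_assoc]
    rw [heq]
    exact htc
  -- total letters
  have hsum_mu : ∑ x : Fin k, (Finset.univ.filter (fun i : Fin (2 * r ^ 2 + r) => x ∈ π i)).card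
      = (2 * r ^ 2 + r) * m := by
    have h1 : ∀ x : Fin k, (Finset.univ.filter (fun i : Fin (2 * r ^ 2 + r) => x ∈ π i)).card
        = ∑ i : Fin (2 * r ^ 2 + r), if x ∈ π i then 1 else 0 := fun x => Finset.card_filter _ _
    calc ∑ x : Fin k, (Finset.univ.filter (fun i : Fin (2 * r ^ 2 + r) => x ∈ π i)).card
        = ∑ x : Fin k, ∑ i : Fin (2 * r ^ 2 + r), if x ∈ π i then 1 else 0 :=
          Finset.sum_congr rfl (fun x _ => h1 x)
      _ = ∑ i : Fin (2 * r ^ 2 + r), ∑ x : Fin k, if x ∈ π i then 1 else 0 := Finset.sum_comm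
      _ = ∑ i : Fin (2 * r ^ 2 + r), m := by
          refine Finset.sum_congr rfl (fun i _ => ?_)
          rw [← Finset.card_filter]
          have h2 : Finset.univ.filter (fun x : Fin k => x ∈ π i) = (π i).toFinset := by
            ext x; simp
          rw [h2, List.toFinset_card_of_nodup (hπ i).1, (hπ i).2, hmdef]
      _ = (2 * r ^ 2 + r) * m := by simp [Finset.card_univ, mul_comm]
  have hsumT : r * m ≤ ∑ p ∈ T, (com p).card := by
    have h3 : (2 * r ^ 2 + r) * m ≤ (∑ x : Fin k, (T.filter (fun p => x ∈ com p)).card) + 2 * k := by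
      rw [← hsum_mu]
      calc ∑ x : Fin k, (Finset.univ.filter (fun i : Fin (2 * r ^ 2 + r) => x ∈ π i)).card
          ≤ ∑ x : Fin k, ((T.filter (fun p => x ∈ com p)).card + 2) :=
            Finset.sum_le_sum (fun x _ => hmu x)
        _ = (∑ x : Fin k, (T.filter (fun p => x ∈ com p)).card) + 2 * k := by
            rw [Finset.sum_add_distrib]
            simp [Finset.card_univ, mul_comm]
    rw [← key] at h3
    have hnm : (2 * r ^ 2 + r) * m = 2 * k + r * m := by rw [hm]; ring
    omega
  -- T nonempty, pick maximizer
  have hTne : T.Nonempty := by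
    refine ⟨(⟨0, by omega⟩, ⟨1, by omega⟩, ⟨2, by omega⟩), ?_⟩
    rw [hTdef, Finset.mem_filter]
    exact ⟨Finset.mem_univ _, Fin.mk_lt_mk.2 zero_lt_one, Fin.mk_lt_mk.2 one_lt_two⟩
  obtain ⟨p, hpT, hpmax⟩ := T.exists_max_image (fun p => (com p).card) hTne
  have hsum_le : ∑ q ∈ T, (com q).card ≤ T.card * (com p).card := by
    have := Finset.sum_le_card_nsmul T (fun q => (com q).card) ((com p).card)
      (fun q hq => hpmax q hq)
    simpa using this
  have hTcard : T.card ≤ (2 * r ^ 2 + r) ^ 3 := by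
    have h4 : T.card ≤ Fintype.card
        (Fin (2 * r ^ 2 + r) × Fin (2 * r ^ 2 + r) × Fin (2 * r ^ 2 + r)) := by
      rw [← Finset.card_univ]
      exact Finset.card_le_card (Finset.filter_subset _ _)
    calc T.card ≤ _ := h4
      _ = (2 * r ^ 2 + r) ^ 3 := by simp [Fintype.card_prod]; ring
  have hn27 : (2 * r ^ 2 + r) ^ 3 ≤ 27 * r ^ 6 := by
    have hrr : r ≤ r ^ 2 := by nlinarith
    have h5 : 2 * r ^ 2 + r ≤ 3 * r ^ 2 := by omega
    calc (2 * r ^ 2 + r) ^ 3 ≤ (3 * r ^ 2) ^ 3 := Nat.pow_le_pow_left h5 3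
      _ = 27 * r ^ 6 := by ring
  obtain ⟨hij, hjl⟩ : p.1 < p.2.1 ∧ p.2.1 < p.2.2 := by
    have := hpT; rw [hTdef, Finset.mem_filter] at this; exact this.2
  refine ⟨p.1, p.2.1, p.2.2, hij, hjl, ?_⟩
  set P := LCS [π p.1, π p.2.1] * LCS [π p.1, π p.2.2] * LCS [π p.2.1, π p.2.2] with hP
  have hPt : (com p).card ≤ P := card_inter_le _ _ _
  have hNat : k ≤ P * r ^ 8 := by
    have h6 : r * m ≤ 27 * r ^ 6 * P := by
      calc r * m ≤ ∑ q ∈ T, (com q).card := hsumT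
        _ ≤ T.card * (com p).card := hsum_le
        _ ≤ (27 * r ^ 6) * P := Nat.mul_le_mul (hTcard.trans hn27) hPt
    calc k = r * (r * m) := by rw [hm]; ring
      _ ≤ r * (27 * r ^ 6 * P) := Nat.mul_le_mul_left r h6
      _ = 27 * (r ^ 7 * P) := by ring
      _ ≤ r * (r ^ 7 * P) := Nat.mul_le_mul_right _ (by omega)
      _ = P * r ^ 8 := by ring
  have hrpos : (0:ℝ) < (r:ℝ) ^ 8 := by
    have : (0:ℝ) < (r:ℝ) := by exact_mod_cast (by omega : 0 < r)
    positivity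
  rw [div_le_iff₀ hrpos]
  exact_mod_cast hNat
end basics
end

section
/- There exists r₀ such that for every integer r ≥ r₀ the following holds. Set k := 2^r − (2^r mod r²) (so that r² divides k). Then every word w of length 2k + 5k/r over the alphabet [k] = {1,…,k} satisfies M(w) ≥ k^{1/2} / (2r⁴). -/
section Aux
variable {k : ℕ}

lemma aux_card_le_numOcc {ι : Type} [Fintype ι] (v w : List (Fin k))
    (F : ι → (Fin v.length → Fin w.length))
    (hmono : ∀ e, StrictMono (F e))
    (hval : ∀ e i, v.get i = w.get (F e i))
    (hinj : Function.Injective F) :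
    Fintype.card ι ≤ numOcc v w := by
  rw [numOcc]
  have h2 : Function.Injective (fun e : ι => (⟨F e, hmono e, hval e⟩ :
      {f : Fin v.length → Fin w.length // StrictMono f ∧
        ∀ i : Fin v.length, v.get i = w.get (f i)})) :=
    fun e e' h => hinj (congrArg Subtype.val h)
  simpa [Nat.card_eq_fintype_card] using Nat.card_le_card_of_injective _ h2

lemma aux_numOcc_le (v w : List (Fin k)) :
    numOcc v w ≤ (w.length + 1) ^ w.length := by
  rcases le_or_gt v.length w.length with h | h
  · calc numOcc v w ≤ Nat.card (Fin v.length → Fin w.length) :=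
          Nat.card_le_card_of_injective _ Subtype.val_injective
    _ = w.length ^ v.length := by simp [Nat.card_eq_fintype_card]
    _ ≤ (w.length + 1) ^ v.length := Nat.pow_le_pow_left (by omega) _
    _ ≤ (w.length + 1) ^ w.length := Nat.pow_le_pow_right (by omega) h
  · have hE : IsEmpty {f : Fin v.length → Fin w.length // StrictMono f ∧
        ∀ i : Fin v.length, v.get i = w.get (f i)} := by
      constructor
      rintro ⟨f, hf, -⟩
      have := Fintype.card_le_of_injective f hf.injective
      simp only [Fintype.card_fin] at this
      omega
    rw [numOcc, Nat.card_of_isEmpty]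
    exact Nat.zero_le _

lemma aux_le_maxOcc (v w : List (Fin k)) : numOcc v w ≤ maxOcc w := by
  apply le_csSup
  · exact ⟨(w.length + 1) ^ w.length, by rintro m ⟨v', rfl⟩; exact aux_numOcc_le v' w⟩
  · exact ⟨v, rfl⟩

lemma aux_one_le_maxOcc (w : List (Fin k)) : 1 ≤ maxOcc w := by
  refine le_trans ?_ (aux_le_maxOcc [] w)
  have := aux_card_le_numOcc (ι := PUnit) ([] : List (Fin k)) w
    (F := fun _ => Fin.elim0) (fun _ => fun i => i.elim0) (fun _ i => i.elim0)
    (fun a b _ => rfl)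
  simpa using this

lemma aux_exists_enum (w : List (Fin k)) (S : Finset (Fin k)) (key : Fin k → Fin w.length)
    (hkey : ∀ x ∈ S, w.get (key x) = x) :
    ∃ E : Fin S.card → Fin k, (∀ i, E i ∈ S) ∧
      (∀ i j, i < j → key (E i) < key (E j)) ∧ (∀ x ∈ S, ∃ i, E i = x) := by
  classical
  have hinj : Set.InjOn key S := fun x hx y hy h => by
    rw [← hkey x hx, h, hkey y hy]
  have hc : (S.image key).card = S.card := Finset.card_image_of_injOn hinj
  let e := (S.image key).orderIsoOfFin hc
  have hmem : ∀ i, w.get ((e i : Fin w.length)) ∈ S ∧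
      key (w.get ((e i : Fin w.length))) = (e i : Fin w.length) := by
    intro i
    obtain ⟨x, hx, hex⟩ := Finset.mem_image.1 (e i).2
    constructor
    · rw [← hex, hkey x hx]; exact hx
    · rw [← hex, hkey x hx]
  refine ⟨fun i => w.get ((e i : Fin w.length)), fun i => (hmem i).1, ?_, ?_⟩
  · intro i j hij
    rw [(hmem i).2, (hmem j).2]
    exact e.strictMono hij
  · intro x hx
    refine ⟨e.symm ⟨key x, Finset.mem_image_of_mem key hx⟩, ?_⟩
    show w.get _ = x
    rw [show ((e (e.symm ⟨key x, Finset.mem_image_of_mem key hx⟩) : {y // y ∈ S.image key}) : Fin w.length) = key x by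
      rw [OrderIso.apply_symm_apply]]
    exact hkey x hx

end Aux

section T3
variable {k : ℕ}

lemma aux_T3 (w v : List (Fin k)) (a : ℕ) (ha : a ≤ v.length)
    (P Q Z : Fin v.length → Fin w.length)
    (hQ : ∀ i j : Fin v.length, i < j → Q i < Q j)
    (hQv : ∀ i, v.get i = w.get (Q i))
    (hP : ∀ i j : Fin v.length, i < j → (j : ℕ) < a → P i < P j)
    (hPQ : ∀ i : Fin v.length, (i : ℕ) < a → P i < Q i)
    (hPv : ∀ i : Fin v.length, (i : ℕ) < a → v.get i = w.get (P i))
    (hZ : ∀ i j : Fin v.length, i < j → a ≤ (i : ℕ) → Z i < Z j)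
    (hQZ : ∀ i : Fin v.length, a ≤ (i : ℕ) → Q i < Z i)
    (hZv : ∀ i : Fin v.length, a ≤ (i : ℕ) → v.get i = w.get (Z i)) :
    (a + 1) * (v.length - a + 1) ≤ numOcc v w := by
  classical
  set F : (Fin (a+1) × Fin (v.length - a + 1)) → Fin v.length → Fin w.length :=
    fun e i => if (i:ℕ) < e.1.1 then P i else if (i:ℕ) < a + e.2.1 then Q i else Z i with hFdef
  have hmono : ∀ e, StrictMono (F e) := by
    rintro ⟨j₁, j₂⟩
    intro i j hij
    have hij' : (i:ℕ) < (j:ℕ) := hij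
    have hj₁ : j₁.1 ≤ a := Nat.lt_succ_iff.mp j₁.2
    simp only [hFdef]
    by_cases h1 : (i:ℕ) < j₁.1
    · have hia : (i:ℕ) < a := lt_of_lt_of_le h1 hj₁
      rw [if_pos h1]
      by_cases h2 : (j:ℕ) < j₁.1
      · rw [if_pos h2]
        exact hP i j hij (lt_of_lt_of_le h2 hj₁)
      · rw [if_neg h2]
        have hPQi : P i < Q j := lt_trans (hPQ i hia) (hQ i j hij)
        by_cases h3 : (j:ℕ) < a + j₂.1
        · rw [if_pos h3]; exact hPQi
        · rw [if_neg h3]; exact lt_trans hPQi (hQZ j (by omega))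
    · rw [if_neg h1, if_neg (show ¬ (j:ℕ) < j₁.1 by omega)]
      by_cases h2 : (i:ℕ) < a + j₂.1
      · rw [if_pos h2]
        by_cases h3 : (j:ℕ) < a + j₂.1
        · rw [if_pos h3]; exact hQ i j hij
        · rw [if_neg h3]; exact lt_trans (hQ i j hij) (hQZ j (by omega))
      · rw [if_neg h2, if_neg (show ¬ (j:ℕ) < a + j₂.1 by omega)]
        exact hZ i j hij (by omega)
  have hval : ∀ e i, v.get i = w.get (F e i) := by
    rintro ⟨j₁, j₂⟩ i
    have hj₁ : j₁.1 ≤ a := Nat.lt_succ_iff.mp j₁.2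
    simp only [hFdef]
    split_ifs with h1 h2
    · exact hPv i (lt_of_lt_of_le h1 hj₁)
    · exact hQv i
    · exact hZv i (by omega)
  have main₁ : ∀ e e', F e = F e' → e.1.1 < e'.1.1 → False := by
    rintro ⟨j₁, j₂⟩ ⟨j₁', j₂'⟩ hEq hlt
    have hlt' : j₁.1 < j₁'.1 := hlt
    have hj₁' : j₁'.1 ≤ a := Nat.lt_succ_iff.mp j₁'.2
    have hi : j₁.1 < v.length := by omega
    have h := congrFun hEq ⟨j₁.1, hi⟩
    simp only [hFdef] at h
    rw [if_neg (show ¬ ((⟨j₁.1, hi⟩ : Fin v.length) : ℕ) < j₁.1 from Nat.lt_irrefl _),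
      if_pos (show ((⟨j₁.1, hi⟩ : Fin v.length) : ℕ) < j₁'.1 from hlt')] at h
    have hia : ((⟨j₁.1, hi⟩ : Fin v.length) : ℕ) < a := lt_of_lt_of_le hlt' hj₁'
    have hPQi := hPQ _ hia
    by_cases h2 : j₁.1 < a + j₂.1
    · rw [if_pos (show ((⟨j₁.1, hi⟩ : Fin v.length) : ℕ) < a + j₂.1 from h2)] at h
      exact absurd h.symm (ne_of_lt hPQi)
    · rw [if_neg (show ¬ ((⟨j₁.1, hi⟩ : Fin v.length) : ℕ) < a + j₂.1 from h2)] at h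
      exact absurd h.symm (ne_of_lt (lt_trans hPQi (hQZ _ (show a ≤ j₁.1 by omega))))
  have main₂ : ∀ e e', F e = F e' → e.1.1 = e'.1.1 → e.2.1 < e'.2.1 → False := by
    rintro ⟨j₁, j₂⟩ ⟨j₁', j₂'⟩ hEq h11 hlt
    have h11' : j₁.1 = j₁'.1 := h11
    have hlt' : j₂.1 < j₂'.1 := hlt
    have hj₁ : j₁.1 ≤ a := Nat.lt_succ_iff.mp j₁.2
    have hj₂' : j₂'.1 ≤ v.length - a := Nat.lt_succ_iff.mp j₂'.2
    have hi : a + j₂.1 < v.length := by omega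
    have h : (if a + j₂.1 < j₁.1 then P ⟨a + j₂.1, hi⟩ else
        if a + j₂.1 < a + j₂.1 then Q ⟨a + j₂.1, hi⟩ else Z ⟨a + j₂.1, hi⟩)
        = (if a + j₂.1 < j₁'.1 then P ⟨a + j₂.1, hi⟩ else
        if a + j₂.1 < a + j₂'.1 then Q ⟨a + j₂.1, hi⟩ else Z ⟨a + j₂.1, hi⟩) :=
      congrFun hEq ⟨a + j₂.1, hi⟩
    rw [if_neg (show ¬ a + j₂.1 < j₁.1 by omega),
      if_neg (show ¬ a + j₂.1 < a + j₂.1 by omega),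
      if_neg (show ¬ a + j₂.1 < j₁'.1 by omega),
      if_pos (show a + j₂.1 < a + j₂'.1 by omega)] at h
    exact absurd h (ne_of_gt (hQZ _ (show a ≤ a + j₂.1 by omega)))
  have hinj : Function.Injective F := by
    rintro e e' h
    have h1 : e.1.1 = e'.1.1 := by
      rcases lt_trichotomy e.1.1 e'.1.1 with h' | h' | h'
      · exact (main₁ e e' h h').elim
      · exact h'
      · exact (main₁ e' e h.symm h').elim
    have h2 : e.2.1 = e'.2.1 := by
      rcases lt_trichotomy e.2.1 e'.2.1 with h' | h' | h'
      · exact (main₂ e e' h h1 h').elim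
      · exact h'
      · exact (main₂ e' e h.symm h1.symm h').elim
    exact Prod.ext (Fin.ext h1) (Fin.ext h2)
  have hfin := aux_card_le_numOcc v w F hmono hval hinj
  simpa using hfin

end T3

lemma aux_sq : ∀ r : ℕ, 8 ≤ r → r^2 ≤ 2^(r-1) := by
  intro r hr
  induction r, hr using Nat.le_induction with
  | base => norm_num
  | succ n hn ih =>
    have h1 : 2^((n+1)-1) = 2 * 2^(n-1) := by
      rw [Nat.succ_sub_one]
      conv_lhs => rw [show n = (n-1)+1 by omega]
      rw [pow_succ]; ring
    have h2 : (n+1)^2 ≤ 2 * n^2 := by nlinarith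
    calc (n+1)^2 ≤ 2*n^2 := h2
    _ ≤ 2*2^(n-1) := by omega
    _ = 2^((n+1)-1) := h1.symm


/-- There exists `r₀` such that for every `r ≥ r₀`, setting `k := 2^r - (2^r mod r²)`
(so `r² ∣ k`), every word `w` of length `2k + 5k/r` over the alphabet `[k]` satisfies
`M(w) ≥ √k / (2r⁴)`. -/
theorem stmt9 :
    ∃ r₀ : ℕ, ∀ r : ℕ, r₀ ≤ r → ∀ k : ℕ, k = 2 ^ r - 2 ^ r % r ^ 2 →
      ∀ w : List (Fin k), w.length = 2 * k + 5 * (k / r) →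
        Real.sqrt k / (2 * (r : ℝ) ^ 4) ≤ (maxOcc w : ℝ) := by
  classical
  refine ⟨100, ?_⟩
  intro r hr k hk w hw
  have hr8 : 8 ≤ r := by omega
  have hrsq : r^2 ≤ 2^(r-1) := aux_sq r hr8
  have h2r : 2^r = 2*2^(r-1) := by
    conv_lhs => rw [show r = (r-1)+1 by omega]
    rw [pow_succ]; ring
  have hrpos : 0 < r := by omega
  have hmod : 2^r % r^2 < r^2 := Nat.mod_lt _ (by positivity)
  have hmle : 2^r % r^2 ≤ 2^r := Nat.mod_le _ _
  have hm0 : 0 ≤ 2^r % r^2 := Nat.zero_le _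
  have hk1 : k ≤ 2^r := by omega
  have hk2 : 2^(r-1) ≤ k := by omega
  have hp1 : 0 < 2^(r-1) := pow_pos (by norm_num) _
  have hkpos : 0 < k := by omega
  have hr2k : 2*r ≤ k := by nlinarith
  set C := maxOcc w with hCdef
  have hC1 : 1 ≤ C := aux_one_le_maxOcc w
  suffices hKC : k ≤ 4 * r^8 * C^2 by
    have hrR : (0:ℝ) < (r:ℝ) := by exact_mod_cast hrpos
    have hden : (0:ℝ) < 2 * (r:ℝ)^4 := by positivity
    rw [div_le_iff₀ hden]
    have h1 : Real.sqrt k ≤ Real.sqrt (((4*r^8*C^2 : ℕ) : ℝ)) :=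
      Real.sqrt_le_sqrt (by exact_mod_cast hKC)
    have h2 : ((4*r^8*C^2 : ℕ) : ℝ) = (2*(r:ℝ)^4*(C:ℝ))^2 := by push_cast; ring
    rw [h2, Real.sqrt_sq (by positivity)] at h1
    linarith
  -- the occurrence sets
  let O : Fin k → Finset (Fin w.length) := fun a => Finset.univ.filter (fun i => w.get i = a)
  have hOmem : ∀ (a : Fin k) (i : Fin w.length), i ∈ O a ↔ w.get i = a := by
    intro a i; simp [O]
  have hsum : ∑ a : Fin k, (O a).card = w.length := by
    have h := Finset.card_eq_sum_card_fiberwise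
      (f := w.get) (s := Finset.univ) (t := Finset.univ) (fun x _ => Finset.mem_univ _)
    simpa [O] using h.symm
  by_cases hbig : ∃ a : Fin k, r ≤ (O a).card
  · -- Case 1 : some letter occurs at least r times
    obtain ⟨a, hta⟩ := hbig
    set h2 := r/2 with hh2
    set e := (O a).orderIsoOfFin rfl with he
    set v := List.replicate h2 a with hv
    have hvlen : v.length = h2 := by simp [hv]
    let bitv : (Fin h2 → Bool) → ℕ → ℕ := fun ε n => if h : n < h2 then (if ε ⟨n, h⟩ then 1 else 0) else 0
    have hbit : ∀ ε n, bitv ε n ≤ 1 := by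
      intro ε n
      simp only [bitv]
      split_ifs <;> norm_num
    have hlt2 : ∀ (ε : Fin h2 → Bool) (i : Fin v.length), 2*i.1 + bitv ε i.1 < (O a).card := by
      intro ε i
      have h1 := hbit ε i.1
      have h2' : i.1 < h2 := by omega
      omega
    have hkey : 2^h2 ≤ numOcc v w := by
      have hcard := aux_card_le_numOcc (ι := Fin h2 → Bool) v w
        (F := fun ε i => (e ⟨2*i.1 + bitv ε i.1, hlt2 ε i⟩ : Fin w.length))
        ?_ ?_ ?_
      · simpa using hcard
      · intro ε i j hij
        have hij' : i.1 < j.1 := hij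
        have h1 := hbit ε i.1
        have h2' := hbit ε j.1
        exact Subtype.coe_lt_coe.2 (e.strictMono (show Fin.mk _ _ < Fin.mk _ _ from by
          rw [Fin.mk_lt_mk]; omega))
      · intro ε i
        have h1 : v.get i = a := List.eq_of_mem_replicate (List.get_mem ..)
        have h2' : w.get ((e ⟨2*i.1 + bitv ε i.1, hlt2 ε i⟩ : Fin w.length)) = a :=
          (hOmem a _).1 (e _).2
        rw [h1, h2']
      · intro ε ε' hFF
        funext x
        have hx : x.1 < v.length := by omega
        have h := congrFun hFF ⟨x.1, hx⟩
        have h3 := e.injective (Subtype.coe_injective h)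
        rw [Fin.mk.injEq] at h3
        have h3' : 2*x.1 + bitv ε x.1 = 2*x.1 + bitv ε' x.1 := h3
        have h4 : bitv ε x.1 = bitv ε' x.1 := by omega
        simp only [bitv, dif_pos x.2] at h4
        have h5 : (⟨x.1, x.2⟩ : Fin h2) = x := Fin.ext rfl
        rw [h5] at h4
        rcases hb : ε x <;> rcases hb' : ε' x <;> rw [hb, hb'] at h4 <;> simp at h4 <;> tauto
    have hCge : 2^h2 ≤ C := le_trans hkey (aux_le_maxOcc v w)
    have hpow : 2^r ≤ 2*(2^h2 * 2^h2) := by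
      rw [← pow_add]
      have hle : r ≤ h2 + h2 + 1 := by omega
      calc 2^r ≤ 2^(h2+h2+1) := Nat.pow_le_pow_right (by norm_num) hle
      _ = 2*2^(h2+h2) := by rw [pow_succ]; ring
    have hr81 : 1 ≤ r^8 := Nat.one_le_pow _ _ hrpos
    calc k ≤ 2^r := hk1
    _ ≤ 2*(2^h2 * 2^h2) := hpow
    _ ≤ 2*(C*C) := by
        have := Nat.mul_le_mul hCge hCge
        omega
    _ ≤ 4*r^8*C^2 := by nlinarith
  · -- Case 2
    push_neg at hbig
    -- L = letters occurring at least 3 times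
    set L := Finset.univ.filter (fun a : Fin k => 3 ≤ (O a).card) with hLdef
    have hmcount : 5*(k/r) ≤ L.card * r := by
      have h1 : ∑ a ∈ L, (O a).card ≤ L.card * r := by
        have := Finset.sum_le_card_nsmul L (fun a => (O a).card) r
          (fun x _ => le_of_lt (hbig x))
        simpa [smul_eq_mul] using this
      have h2 : ∑ a ∈ Finset.univ.filter (fun a : Fin k => ¬ 3 ≤ (O a).card), (O a).card ≤ 2*k := by
        have hb := Finset.sum_le_card_nsmul
          (Finset.univ.filter (fun a : Fin k => ¬ 3 ≤ (O a).card)) (fun a => (O a).card) 2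
          (fun x hx => by
            have := (Finset.mem_filter.1 hx).2
            show (O x).card ≤ 2
            omega)
        have hcle : (Finset.univ.filter (fun a : Fin k => ¬ 3 ≤ (O a).card)).card ≤ k := by
          refine le_trans (Finset.card_filter_le _ _) ?_
          simp
        calc ∑ a ∈ Finset.univ.filter (fun a : Fin k => ¬ 3 ≤ (O a).card), (O a).card
            ≤ (Finset.univ.filter (fun a : Fin k => ¬ 3 ≤ (O a).card)).card • 2 := hb
        _ = (Finset.univ.filter (fun a : Fin k => ¬ 3 ≤ (O a).card)).card * 2 := smul_eq_mul ..
        _ ≤ k*2 := by omega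
        _ = 2*k := by ring
      have h3 := Finset.sum_filter_add_sum_filter_not Finset.univ
        (fun a : Fin k => 3 ≤ (O a).card) (fun a => (O a).card)
      rw [hsum] at h3
      rw [hLdef] at h1 ⊢
      omega
    -- occurrence triples
    have hwlenpos : 0 < w.length := by omega
    have hOcard3 : ∀ l (h : 3 ≤ (O l).card), (0:ℕ) < (O l).card ∧ 1 < (O l).card ∧ 2 < (O l).card := by
      intro l h; omega
    let pp : Fin k → Fin w.length := fun l =>
      if h : 3 ≤ (O l).card then ((O l).orderIsoOfFin rfl ⟨0, by omega⟩ : Fin w.length)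
      else ⟨0, hwlenpos⟩
    let qq : Fin k → Fin w.length := fun l =>
      if h : 3 ≤ (O l).card then ((O l).orderIsoOfFin rfl ⟨1, by omega⟩ : Fin w.length)
      else ⟨0, hwlenpos⟩
    let zz : Fin k → Fin w.length := fun l =>
      if h : 3 ≤ (O l).card then ((O l).orderIsoOfFin rfl ⟨2, by omega⟩ : Fin w.length)
      else ⟨0, hwlenpos⟩
    have hmemL : ∀ l : Fin k, l ∈ L ↔ 3 ≤ (O l).card := by
      intro l; simp [hLdef]
    have hbasic : ∀ l ∈ L, pp l < qq l ∧ qq l < zz l ∧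
        w.get (pp l) = l ∧ w.get (qq l) = l ∧ w.get (zz l) = l := by
      intro l hl
      have h3 : 3 ≤ (O l).card := (hmemL l).1 hl
      simp only [pp, qq, zz, dif_pos h3]
      refine ⟨?_, ?_, ?_, ?_, ?_⟩
      · exact Subtype.coe_lt_coe.2 (((O l).orderIsoOfFin rfl).strictMono
          (show (⟨0, by omega⟩ : Fin (O l).card) < ⟨1, by omega⟩ by rw [Fin.mk_lt_mk]; omega))
      · exact Subtype.coe_lt_coe.2 (((O l).orderIsoOfFin rfl).strictMono
          (show (⟨1, by omega⟩ : Fin (O l).card) < ⟨2, by omega⟩ by rw [Fin.mk_lt_mk]; omega))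
      · exact (hOmem l _).1 ((O l).orderIsoOfFin rfl ⟨0, by omega⟩).2
      · exact (hOmem l _).1 ((O l).orderIsoOfFin rfl ⟨1, by omega⟩).2
      · exact (hOmem l _).1 ((O l).orderIsoOfFin rfl ⟨2, by omega⟩).2
    have hppqq : ∀ l ∈ L, pp l < qq l := fun l hl => (hbasic l hl).1
    have hqqzz : ∀ l ∈ L, qq l < zz l := fun l hl => (hbasic l hl).2.1
    have hgetp : ∀ l ∈ L, w.get (pp l) = l := fun l hl => (hbasic l hl).2.2.1
    have hgetq : ∀ l ∈ L, w.get (qq l) = l := fun l hl => (hbasic l hl).2.2.2.1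
    have hgetz : ∀ l ∈ L, w.get (zz l) = l := fun l hl => (hbasic l hl).2.2.2.2
    have hqinj : ∀ x ∈ L, ∀ y ∈ L, qq x = qq y → x = y := by
      intro x hx y hy h
      rw [← hgetq x hx, h, hgetq y hy]
    have hpinj : ∀ x ∈ L, ∀ y ∈ L, pp x = pp y → x = y := by
      intro x hx y hy h
      rw [← hgetp x hx, h, hgetp y hy]
    have hzinj : ∀ x ∈ L, ∀ y ∈ L, zz x = zz y → x = y := by
      intro x hx y hy h
      rw [← hgetz x hx, h, hgetz y hy]
    -- relations
    set R₁ : Fin k → Fin k → Prop := fun x y => pp x < pp y ∧ qq x < qq y with hR₁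
    set R₂ : Fin k → Fin k → Prop := fun x y => qq x < qq y ∧ zz x < zz y with hR₂
    set cand₁ : Fin k → Finset (Finset (Fin k)) := fun l =>
      (L.powerset).filter (fun S => (∀ x ∈ S, R₁ x l) ∧
        (∀ x ∈ S, ∀ y ∈ S, x ≠ y → R₁ x y ∨ R₁ y x)) with hcand₁
    set cand₂ : Fin k → Finset (Finset (Fin k)) := fun l =>
      (L.powerset).filter (fun S => (∀ x ∈ S, R₂ l x) ∧
        (∀ x ∈ S, ∀ y ∈ S, x ≠ y → R₂ x y ∨ R₂ y x)) with hcand₂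
    set α : Fin k → ℕ := fun l => (cand₁ l).sup Finset.card with hα
    set γ : Fin k → ℕ := fun l => (cand₂ l).sup Finset.card with hγ
    have hcand₁ne : ∀ l, ∅ ∈ cand₁ l := by
      intro l
      rw [hcand₁]
      simp
    have hcand₂ne : ∀ l, ∅ ∈ cand₂ l := by
      intro l
      rw [hcand₂]
      simp
    have hα_attain : ∀ l, ∃ S ∈ cand₁ l, S.card = α l := by
      intro l
      obtain ⟨S, hS, hsup⟩ := Finset.exists_mem_eq_sup (cand₁ l) ⟨∅, hcand₁ne l⟩ Finset.card
      exact ⟨S, hS, hsup.symm⟩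
    have hγ_attain : ∀ l, ∃ S ∈ cand₂ l, S.card = γ l := by
      intro l
      obtain ⟨S, hS, hsup⟩ := Finset.exists_mem_eq_sup (cand₂ l) ⟨∅, hcand₂ne l⟩ Finset.card
      exact ⟨S, hS, hsup.symm⟩
    have hcand₁mem : ∀ l S, S ∈ cand₁ l ↔ (S ⊆ L ∧ (∀ x ∈ S, R₁ x l) ∧
        (∀ x ∈ S, ∀ y ∈ S, x ≠ y → R₁ x y ∨ R₁ y x)) := by
      intro l S
      rw [hcand₁]
      simp only [Finset.mem_filter, Finset.mem_powerset]
    have hcand₂mem : ∀ l S, S ∈ cand₂ l ↔ (S ⊆ L ∧ (∀ x ∈ S, R₂ l x) ∧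
        (∀ x ∈ S, ∀ y ∈ S, x ≠ y → R₂ x y ∨ R₂ y x)) := by
      intro l S
      rw [hcand₂]
      simp only [Finset.mem_filter, Finset.mem_powerset]
    have hα_mono : ∀ a ∈ L, ∀ b, R₁ a b → α a < α b := by
      intro a ha b hab
      obtain ⟨S, hS, hcard⟩ := hα_attain a
      obtain ⟨hSL, hSR, hSal⟩ := (hcand₁mem a S).1 hS
      have hanotin : a ∉ S := by
        intro hmem
        exact lt_irrefl _ (hSR a hmem).1
      have hmem' : insert a S ∈ cand₁ b := by
        rw [hcand₁mem]
        refine ⟨Finset.insert_subset ha hSL, ?_, ?_⟩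
        · intro x hx
          rcases Finset.mem_insert.1 hx with rfl | hx'
          · exact hab
          · exact ⟨lt_trans (hSR x hx').1 hab.1, lt_trans (hSR x hx').2 hab.2⟩
        · intro x hx y hy hxy
          rcases Finset.mem_insert.1 hx with rfl | hx' <;>
            rcases Finset.mem_insert.1 hy with h' | hy'
          · exact absurd h'.symm hxy
          · exact Or.inr (hSR y hy')
          · rw [h'] at *
            exact Or.inl (hSR x hx')
          · exact hSal x hx' y hy' hxy
      have hle : (insert a S).card ≤ α b := Finset.le_sup (f := Finset.card) hmem'
      rw [Finset.card_insert_of_notMem hanotin, hcard] at hle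
      omega
    have hγ_mono : ∀ a ∈ L, ∀ b, R₂ b a → γ a < γ b := by
      intro a ha b hab
      obtain ⟨S, hS, hcard⟩ := hγ_attain a
      obtain ⟨hSL, hSR, hSal⟩ := (hcand₂mem a S).1 hS
      have hanotin : a ∉ S := by
        intro hmem
        exact lt_irrefl _ (hSR a hmem).1
      have hmem' : insert a S ∈ cand₂ b := by
        rw [hcand₂mem]
        refine ⟨Finset.insert_subset ha hSL, ?_, ?_⟩
        · intro x hx
          rcases Finset.mem_insert.1 hx with rfl | hx'
          · exact hab
          · exact ⟨lt_trans hab.1 (hSR x hx').1, lt_trans hab.2 (hSR x hx').2⟩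
        · intro x hx y hy hxy
          rcases Finset.mem_insert.1 hx with rfl | hx' <;>
            rcases Finset.mem_insert.1 hy with h' | hy'
          · exact absurd h'.symm hxy
          · exact Or.inl (hSR y hy')
          · rw [h'] at *
            exact Or.inr (hSR x hx')
          · exact hSal x hx' y hy' hxy
      have hle : (insert a S).card ≤ γ b := Finset.le_sup (f := Finset.card) hmem'
      rw [Finset.card_insert_of_notMem hanotin, hcard] at hle
      omega
    have hprod : ∀ l ∈ L, (α l + 1) * (γ l + 1) ≤ C := by
      intro l hl
      obtain ⟨S₁, hS₁, hS₁card⟩ := hα_attain l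
      obtain ⟨hS₁L, hS₁R, hS₁al⟩ := (hcand₁mem l S₁).1 hS₁
      obtain ⟨S₂, hS₂, hS₂card⟩ := hγ_attain l
      obtain ⟨hS₂L, hS₂R, hS₂al⟩ := (hcand₂mem l S₂).1 hS₂
      have hlnotin : l ∉ S₂ := fun hm => lt_irrefl _ (hS₂R l hm).1
      set S₂' := insert l S₂ with hS₂'def
      have hS₂'card : S₂'.card = γ l + 1 := by
        rw [hS₂'def, Finset.card_insert_of_notMem hlnotin, hS₂card]
      have hS₂'sub : S₂' ⊆ L := Finset.insert_subset hl hS₂L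
      have hS₂'q : ∀ x ∈ S₂', qq l ≤ qq x := by
        intro x hx
        rcases Finset.mem_insert.1 hx with rfl | hx'
        · exact le_refl _
        · exact le_of_lt (hS₂R x hx').1
      have hS₂'al : ∀ x ∈ S₂', ∀ y ∈ S₂', x ≠ y → R₂ x y ∨ R₂ y x := by
        intro x hx y hy hxy
        rcases Finset.mem_insert.1 hx with rfl | hx' <;>
          rcases Finset.mem_insert.1 hy with h' | hy'
        · exact absurd h'.symm hxy
        · exact Or.inl (hS₂R y hy')
        · rw [h'] at *
          exact Or.inr (hS₂R x hx')
        · exact hS₂al x hx' y hy' hxy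
      obtain ⟨E₁, hE₁mem, hE₁mono, hE₁surj⟩ :=
        aux_exists_enum w S₁ qq (fun x hx => hgetq x (hS₁L hx))
      obtain ⟨E₂, hE₂mem, hE₂mono, hE₂surj⟩ :=
        aux_exists_enum w S₂' qq (fun x hx => hgetq x (hS₂'sub hx))
      have h0S₂' : 0 < S₂'.card := by omega
      have hE₂0 : E₂ ⟨0, h0S₂'⟩ = l := by
        obtain ⟨i₀, hi₀⟩ := hE₂surj l (Finset.mem_insert_self l S₂)
        rcases Nat.eq_zero_or_pos i₀.1 with h' | h'
        · rw [← hi₀]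
          congr 1
          exact Fin.ext h'.symm
        · exfalso
          have hlt := hE₂mono ⟨0, h0S₂'⟩ i₀ (by simpa [Fin.lt_def] using h')
          rw [hi₀] at hlt
          exact absurd (hS₂'q _ (hE₂mem ⟨0, h0S₂'⟩)) (not_le.2 hlt)
      set t := S₁.card + S₂'.card with ht
      set ℓn : ℕ → Fin k := fun i =>
        if h : i < S₁.card then E₁ ⟨i, h⟩
        else if h' : i - S₁.card < S₂'.card then E₂ ⟨i - S₁.card, h'⟩ else l with hℓn
      set v := List.ofFn (fun i : Fin t => ℓn i.1) with hv
      have hvlen : v.length = t := by rw [hv]; exact List.length_ofFn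
      have hvget : ∀ i : Fin v.length, v.get i = ℓn i.1 := by
        intro i
        have hlt : i.1 < (List.ofFn fun j : Fin t => ℓn j.1).length := i.2
        calc v.get i = (List.ofFn fun j : Fin t => ℓn j.1)[i.1]'hlt := rfl
        _ = ℓn i.1 := by rw [List.getElem_ofFn]
      have hℓ₁ : ∀ (i:ℕ) (h : i < S₁.card), ℓn i = E₁ ⟨i, h⟩ := by
        intro i h
        rw [hℓn]
        dsimp only
        rw [dif_pos h]
      have hℓ₂ : ∀ (i:ℕ) (h : ¬ i < S₁.card) (h2 : i - S₁.card < S₂'.card),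
          ℓn i = E₂ ⟨i - S₁.card, h2⟩ := by
        intro i h h2
        rw [hℓn]
        dsimp only
        rw [dif_neg h, dif_pos h2]
      have hℓmem : ∀ i : ℕ, i < t → ℓn i ∈ L := by
        intro i hi
        by_cases h : i < S₁.card
        · rw [hℓ₁ i h]; exact hS₁L (hE₁mem _)
        · rw [hℓ₂ i h (by omega)]; exact hS₂'sub (hE₂mem _)
      have hQmono : ∀ i j : ℕ, i < j → j < t → qq (ℓn i) < qq (ℓn j) := by
        intro i j hij hjt
        by_cases hiS : i < S₁.card
        · rw [hℓ₁ i hiS]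
          by_cases hjS : j < S₁.card
          · rw [hℓ₁ j hjS]
            exact hE₁mono _ _ (by simpa [Fin.lt_def] using hij)
          · rw [hℓ₂ j hjS (by omega)]
            exact lt_of_lt_of_le (hS₁R _ (hE₁mem _)).2 (hS₂'q _ (hE₂mem _))
        · have hjS : ¬ j < S₁.card := by omega
          rw [hℓ₂ i hiS (by omega), hℓ₂ j hjS (by omega)]
          refine hE₂mono _ _ ?_
          rw [Fin.lt_def]
          show i - S₁.card < j - S₁.card
          omega
      have hPmono : ∀ i j : ℕ, i < j → j < S₁.card + 1 → j < t → pp (ℓn i) < pp (ℓn j) := by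
        intro i j hij hjS1 hjt
        have hiS : i < S₁.card := by omega
        rw [hℓ₁ i hiS]
        by_cases hjS : j < S₁.card
        · rw [hℓ₁ j hjS]
          have hq := hE₁mono ⟨i, hiS⟩ ⟨j, hjS⟩ (by simpa [Fin.lt_def] using hij)
          have hne : E₁ ⟨i, hiS⟩ ≠ E₁ ⟨j, hjS⟩ := fun he => absurd (he ▸ hq) (lt_irrefl _)
          rcases hS₁al _ (hE₁mem _) _ (hE₁mem _) hne with h' | h'
          · exact h'.1
          · exact absurd h'.2 (not_lt.2 (le_of_lt hq))
        · have hj2 : j - S₁.card = 0 := by omega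
          rw [hℓ₂ j hjS (by omega)]
          rw [show (⟨j - S₁.card, by omega⟩ : Fin S₂'.card) = ⟨0, h0S₂'⟩ from Fin.ext hj2]
          rw [hE₂0]
          exact (hS₁R _ (hE₁mem _)).1
      have hZmono : ∀ i j : ℕ, i < j → S₁.card ≤ i → j < t → zz (ℓn i) < zz (ℓn j) := by
        intro i j hij hiS hjt
        have hi2 : i - S₁.card < S₂'.card := by omega
        have hj2 : j - S₁.card < S₂'.card := by omega
        rw [hℓ₂ i (by omega) hi2, hℓ₂ j (by omega) hj2]
        have hq := hE₂mono ⟨i - S₁.card, hi2⟩ ⟨j - S₁.card, hj2⟩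
          (by rw [Fin.lt_def]; show i - S₁.card < j - S₁.card; omega)
        have hne : E₂ ⟨i - S₁.card, hi2⟩ ≠ E₂ ⟨j - S₁.card, hj2⟩ :=
          fun he => absurd (he ▸ hq) (lt_irrefl _)
        rcases hS₂'al _ (hE₂mem _) _ (hE₂mem _) hne with h' | h'
        · exact h'.2
        · exact absurd h'.1 (not_lt.2 (le_of_lt hq))
      have hT := aux_T3 w v (S₁.card + 1) (by omega)
        (P := fun i => pp (ℓn i.1)) (Q := fun i => qq (ℓn i.1)) (Z := fun i => zz (ℓn i.1))
        (fun i j hij => hQmono i.1 j.1 hij (by have := j.2; omega))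
        (fun i => by rw [hvget i]; exact (hgetq _ (hℓmem i.1 (by have := i.2; omega))).symm)
        (fun i j hij hj => hPmono i.1 j.1 hij hj (by have := j.2; omega))
        (fun i _ => hppqq _ (hℓmem i.1 (by have := i.2; omega)))
        (fun i _ => by rw [hvget i]; exact (hgetp _ (hℓmem i.1 (by have := i.2; omega))).symm)
        (fun i j hij hi => hZmono i.1 j.1 hij (by omega) (by have := j.2; omega))
        (fun i _ => hqqzz _ (hℓmem i.1 (by have := i.2; omega)))
        (fun i _ => by rw [hvget i]; exact (hgetz _ (hℓmem i.1 (by have := i.2; omega))).symm)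
      have h1 : v.length - (S₁.card + 1) + 1 = γ l + 1 := by omega
      calc (α l + 1) * (γ l + 1) ≤ (α l + 1 + 1) * (γ l + 1) :=
            Nat.mul_le_mul (by omega) (le_refl _)
      _ = (S₁.card + 1 + 1) * (v.length - (S₁.card + 1) + 1) := by rw [h1, hS₁card]
      _ ≤ numOcc v w := hT
      _ ≤ C := aux_le_maxOcc v w
    -- fibers of (α, γ) have size at most C
    have hfiber : ∀ pr : ℕ × ℕ, (L.filter (fun l => (α l, γ l) = pr)).card ≤ C := by
      intro pr
      set Fb := L.filter (fun l => (α l, γ l) = pr) with hFbdef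
      have hFbL : Fb ⊆ L := Finset.filter_subset _ _
      have hFbαγ : ∀ x ∈ Fb, α x = pr.1 ∧ γ x = pr.2 := by
        intro x hx
        have h := (Finset.mem_filter.1 hx).2
        constructor
        · rw [← h]
        · rw [← h]
      have hpair : ∀ x ∈ Fb, ∀ y ∈ Fb, pp x < pp y → qq y < qq x ∧ zz x < zz y := by
        intro x hx y hy hpxy
        have hxL := hFbL hx
        have hyL := hFbL hy
        have hxy : x ≠ y := fun he => absurd (he ▸ hpxy) (lt_irrefl _)
        have hax : α x = α y := by rw [(hFbαγ x hx).1, (hFbαγ y hy).1]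
        have hgx : γ x = γ y := by rw [(hFbαγ x hx).2, (hFbαγ y hy).2]
        have hq : qq y < qq x := by
          rcases lt_trichotomy (qq x) (qq y) with h' | h' | h'
          · exact absurd (hα_mono x hxL y ⟨hpxy, h'⟩) (by omega)
          · exact absurd (hqinj x hxL y hyL h') hxy
          · exact h'
        refine ⟨hq, ?_⟩
        rcases lt_trichotomy (zz x) (zz y) with h' | h' | h'
        · exact h'
        · exact absurd (hzinj x hxL y hyL h') hxy
        · exact absurd (hγ_mono x hxL y ⟨hq, h'⟩) (by omega)
      obtain ⟨E, hEmem, hEmono, -⟩ := aux_exists_enum w Fb pp (fun x hx => hgetp x (hFbL hx))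
      set ℓf : ℕ → Fin k := fun i => if h : i < Fb.card then E ⟨i, h⟩ else ⟨0, hkpos⟩ with hℓf
      set vf := List.ofFn (fun i : Fin Fb.card => ℓf i.1) with hvf
      have hvflen : vf.length = Fb.card := by rw [hvf]; exact List.length_ofFn
      have hvfget : ∀ i : Fin vf.length, vf.get i = ℓf i.1 := by
        intro i
        have hlt : i.1 < (List.ofFn fun j : Fin Fb.card => ℓf j.1).length := i.2
        calc vf.get i = (List.ofFn fun j : Fin Fb.card => ℓf j.1)[i.1]'hlt := rfl
        _ = ℓf i.1 := by rw [List.getElem_ofFn]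
      have hℓf₁ : ∀ (i:ℕ) (h : i < Fb.card), ℓf i = E ⟨i, h⟩ := by
        intro i h
        rw [hℓf]
        dsimp only
        rw [dif_pos h]
      have hmemf : ∀ i : ℕ, i < Fb.card → ℓf i ∈ L := by
        intro i hi
        rw [hℓf₁ i hi]
        exact hFbL (hEmem _)
      have hPm : ∀ i j : ℕ, i < j → j < Fb.card → pp (ℓf i) < pp (ℓf j) := by
        intro i j hij hju
        rw [hℓf₁ i (by omega), hℓf₁ j hju]
        exact hEmono _ _ (by simpa [Fin.lt_def] using hij)
      have hZm : ∀ i j : ℕ, i < j → j < Fb.card → zz (ℓf i) < zz (ℓf j) := by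
        intro i j hij hju
        have hiu : i < Fb.card := by omega
        have hp := hPm i j hij hju
        rw [hℓf₁ i hiu, hℓf₁ j hju] at hp ⊢
        exact (hpair _ (hEmem _) _ (hEmem _) hp).2
      have hT := aux_T3 w vf Fb.card (by omega)
        (P := fun i => pp (ℓf i.1)) (Q := fun i => zz (ℓf i.1)) (Z := fun i => zz (ℓf i.1))
        (fun i j hij => hZm i.1 j.1 hij (by have := j.2; omega))
        (fun i => by rw [hvfget i]; exact (hgetz _ (hmemf i.1 (by have := i.2; omega))).symm)
        (fun i j hij hj => hPm i.1 j.1 hij (by have := j.2; omega))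
        (fun i hi => lt_trans (hppqq _ (hmemf i.1 (by have := i.2; omega)))
          (hqqzz _ (hmemf i.1 (by have := i.2; omega))))
        (fun i hi => by rw [hvfget i]; exact (hgetp _ (hmemf i.1 (by have := i.2; omega))).symm)
        (fun i j hij hi => absurd hi (by have := i.2; omega))
        (fun i hi => absurd hi (by have := i.2; omega))
        (fun i hi => absurd hi (by have := i.2; omega))
      have h0 : vf.length - Fb.card + 1 = 1 := by omega
      rw [h0, mul_one] at hT
      have := le_trans hT (aux_le_maxOcc vf w)
      omega
    -- assembly
    set φ : Fin k → ℕ × ℕ := fun l => (α l, γ l) with hφ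
    set I := L.image φ with hI
    have hmI : L.card ≤ I.card * C := by
      rw [Finset.card_eq_sum_card_fiberwise (f := φ) (s := L) (t := I)
        (fun x hx => Finset.mem_image_of_mem _ hx)]
      calc ∑ pr ∈ I, (L.filter (fun l => φ l = pr)).card ≤ I.card • C :=
            Finset.sum_le_card_nsmul _ _ _ (fun pr _ => hfiber pr)
      _ = I.card * C := smul_eq_mul ..
    have hIprop : ∀ pr ∈ I, (pr.1+1)*(pr.2+1) ≤ C := by
      intro pr hpr
      obtain ⟨l, hl, rfl⟩ := Finset.mem_image.1 hpr
      exact hprod l hl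
    have hIcard : I.card ≤ (Nat.log 2 C + 1) * C := by
      have hmap : ∀ pr ∈ I, (pr.1+1, pr.2+1) ∈ (Finset.range (Nat.log 2 C + 1)).biUnion
          (fun d => (Finset.Ico (2^d) (2^(d+1))) ×ˢ (Finset.Icc 1 (C / 2^d))) := by
        intro pr hpr
        have hprC := hIprop pr hpr
        have hxC : pr.1 + 1 ≤ C := le_trans (Nat.le_mul_of_pos_right _ (by omega)) hprC
        rw [Finset.mem_biUnion]
        refine ⟨Nat.log 2 (pr.1+1), ?_, ?_⟩
        · rw [Finset.mem_range]
          have := Nat.log_mono_right (b := 2) hxC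
          omega
        · rw [Finset.mem_product]
          constructor
          · rw [Finset.mem_Ico]
            exact ⟨Nat.pow_log_le_self 2 (by omega), Nat.lt_pow_succ_log_self (by norm_num) _⟩
          · rw [Finset.mem_Icc]
            refine ⟨by omega, ?_⟩
            rw [Nat.le_div_iff_mul_le (by positivity)]
            calc (pr.2+1) * 2^(Nat.log 2 (pr.1+1)) ≤ (pr.2+1) * (pr.1+1) :=
                  Nat.mul_le_mul_left _ (Nat.pow_log_le_self 2 (by omega))
            _ = (pr.1+1)*(pr.2+1) := by ring
            _ ≤ C := hprC
      have hinj2 : Set.InjOn (fun pr : ℕ × ℕ => (pr.1+1, pr.2+1)) I := by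
        intro x _ y _ h
        have h1 := congrArg Prod.fst h
        have h2 := congrArg Prod.snd h
        simp only at h1 h2
        exact Prod.ext (by omega) (by omega)
      calc I.card = (I.image (fun pr : ℕ × ℕ => (pr.1+1, pr.2+1))).card :=
            (Finset.card_image_of_injOn hinj2).symm
      _ ≤ ((Finset.range (Nat.log 2 C + 1)).biUnion
            (fun d => (Finset.Ico (2^d) (2^(d+1))) ×ˢ (Finset.Icc 1 (C / 2^d)))).card := by
          apply Finset.card_le_card
          intro x hx
          obtain ⟨pr, hpr, rfl⟩ := Finset.mem_image.1 hx
          exact hmap pr hpr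
      _ ≤ ∑ d ∈ Finset.range (Nat.log 2 C + 1),
            ((Finset.Ico (2^d) (2^(d+1))) ×ˢ (Finset.Icc 1 (C / 2^d))).card :=
          Finset.card_biUnion_le
      _ ≤ (Nat.log 2 C + 1) * C := by
          have hstep := Finset.sum_le_card_nsmul (Finset.range (Nat.log 2 C + 1))
            (fun d => ((Finset.Ico (2^d) (2^(d+1))) ×ˢ (Finset.Icc 1 (C / 2^d))).card) C
            (fun d _ => by
              show ((Finset.Ico (2^d) (2^(d+1))) ×ˢ (Finset.Icc 1 (C / 2^d))).card ≤ C
              rw [Finset.card_product, Nat.card_Ico, Nat.card_Icc]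
              have h2d : 2^(d+1) = 2*2^d := by rw [pow_succ]; ring
              have hdpos : 0 < 2^d := pow_pos (by norm_num) _
              have hdiv : (C/2^d)*(2^d) ≤ C := Nat.div_mul_le_self _ _
              have he1 : 2^(d+1) - 2^d = 2^d := by omega
              have he2 : C/2^d + 1 - 1 = C/2^d := rfl
              rw [he1, he2]
              calc 2^d * (C/2^d) = (C/2^d)*2^d := by ring
              _ ≤ C := hdiv)
          rw [Finset.card_range, smul_eq_mul] at hstep
          exact hstep
    -- final numeric contradiction
    by_contra hcon
    push_neg at hcon
    have hcon' : 4*r^8*(C*C) < k := by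
      rw [pow_two] at hcon
      exact hcon
    have hCle : C*C ≤ 4*r^8*(C*C) := Nat.le_mul_of_pos_left _ (by positivity)
    have hCC : C*C ≤ k := le_trans hCle (le_of_lt hcon')
    have hC2r : C ≤ 2^r := le_trans (le_trans (Nat.le_mul_of_pos_left _ hC1) hCC) hk1
    have hD : Nat.log 2 C ≤ r := by
      have hlog := Nat.log_mono_right (b := 2) hC2r
      rw [Nat.log_pow (by norm_num)] at hlog
      exact hlog
    have hIC : I.card ≤ (r+1) * C := le_trans hIcard (Nat.mul_le_mul_right _ (by omega))
    have hLC : L.card ≤ (r+1)*C*C := by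
      calc L.card ≤ I.card * C := hmI
      _ ≤ ((r+1)*C)*C := Nat.mul_le_mul_right _ hIC
      _ = (r+1)*C*C := by ring
    have h5 : 5*(k/r) ≤ 2*(r^2)*(C*C) := by
      calc 5*(k/r) ≤ L.card * r := hmcount
      _ ≤ ((r+1)*C*C)*r := Nat.mul_le_mul_right _ hLC
      _ ≤ ((2*r)*C*C)*r := by
          have : r+1 ≤ 2*r := by omega
          exact Nat.mul_le_mul_right _ (Nat.mul_le_mul_right _ (Nat.mul_le_mul_right _ this))
      _ = 2*(r^2)*(C*C) := by ring
    have hkdiv : k < r*(k/r) + r := by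
      have hdm := Nat.div_add_mod k r
      have hml := Nat.mod_lt k hrpos
      omega
    have h9 : 5*k ≤ r*(5*(k/r)) + 5*r := by
      have h10' : r*(5*(k/r)) = 5*(r*(k/r)) := by ring
      omega
    have h6 : 5*k ≤ 2*(r^3)*(C*C) + 5*r := by
      have h7 : r*(5*(k/r)) ≤ r*(2*(r^2)*(C*C)) := Nat.mul_le_mul_left _ h5
      have h8 : r*(2*(r^2)*(C*C)) = 2*(r^3)*(C*C) := by ring
      omega
    have h10 : 2*(r^5)*(5*k) ≤ 2*(r^5)*(2*(r^3)*(C*C) + 5*r) := Nat.mul_le_mul_left _ h6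
    have h11 : 2*(r^5)*(2*(r^3)*(C*C) + 5*r) = 4*(r^8)*(C*C) + 10*(r^6) := by ring
    have h12 : 4*(r^8)*(C*C) < k := by
      have : 4*(r^8)*(C*C) = 4*r^8*(C*C) := by ring
      omega
    have h13 : r^2 ≤ k := le_trans hrsq hk2
    have h14 : 10*(r^6) ≤ 10*(r^4)*k := by
      calc 10*(r^6) = 10*(r^4)*(r^2) := by ring
      _ ≤ 10*(r^4)*k := Nat.mul_le_mul_left _ h13
    have h15 : 10*(r^5)*k < (1 + 10*(r^4))*k := by
      calc 10*(r^5)*k = 2*(r^5)*(5*k) := by ring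
      _ ≤ 4*(r^8)*(C*C) + 10*(r^6) := by omega
      _ < k + 10*(r^4)*k := by omega
      _ = (1+10*(r^4))*k := by ring
    have h16 : 10*(r^5) < 1 + 10*(r^4) := by
      by_contra h16n
      push_neg at h16n
      have := Nat.mul_le_mul_right k h16n
      omega
    have h17 : r^5 = r^4*r := by ring
    have h18 : r^4*8 ≤ r^4*r := Nat.mul_le_mul_left _ hr8
    have h19 : 1 ≤ r^4 := Nat.one_le_pow _ _ hrpos
    omega
end

section
/- Fix integers t ≥ 1 and r ≥ 1. Let U be a nonempty subset of {+1,−1}^r and let J ⊆ {1,…,r} be the set of coordinates j such that u_j is the same for all u ∈ U. Then the length of a longest common subsequence of the family {π(u) : u ∈ U} equals t^{|J|}, i.e., LCS({π(u)}_{u∈U}) = t^{|J|}. -/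
/-- Lexicographic "strictly smaller" for vectors in `Fin r → ℤ`. -/
def lexLt {r : ℕ} (x y : Fin r → ℤ) : Prop :=
  ∃ j : Fin r, (∀ i : Fin r, i < j → x i = y i) ∧ x j < y j

/-- The `u`-twisted order on the alphabet `[t]^r`: `a` weakly precedes `b` in `π(u)`
iff `a = b` or `(u₁a₁, …, u_r a_r)` is lexicographically smaller than
`(u₁b₁, …, u_r b_r)` (letters of `[t] = {1,…,t}` are represented by `Fin t`,
with `a i : Fin t` standing for the letter `(a i : ℤ) + 1`). -/
def uLe {t r : ℕ} (u : Fin r → ℤ) (a b : Fin r → Fin t) : Prop :=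
  a = b ∨ lexLt (fun i => u i * ((a i : ℤ) + 1)) (fun i => u i * ((b i : ℤ) + 1))

instance {t r : ℕ} (u : Fin r → ℤ) : DecidableRel (uLe (t := t) (r := r) u) := fun a b => by
  unfold uLe lexLt; infer_instance

/-- `piWord t r u = π(u)`: the word listing every element of the alphabet `[t]^r`
exactly once, in increasing `u`-twisted lexicographic order. -/
noncomputable def piWord (t r : ℕ) (u : Fin r → ℤ) : List (Fin r → Fin t) :=
  (Finset.univ.toList (α := Fin r → Fin t)).mergeSort (fun a b => decide (uLe u a b))

/-- `LCSet W` is the length of a longest word that is a subsequence of every word in `W`. -/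
noncomputable def LCSet {α : Type*} (W : Set (List α)) : ℕ :=
  sSup {L | ∃ x : List α, (∀ w ∈ W, x.Sublist w) ∧ x.length = L}

namespace Stmt11Aux

/-- The twisted vector. -/
def tw {t r : ℕ} (u : Fin r → ℤ) (a : Fin r → Fin t) : Fin r → ℤ :=
  fun i => u i * ((a i : ℤ) + 1)

theorem uLe_def {t r : ℕ} (u : Fin r → ℤ) (a b : Fin r → Fin t) :
    uLe u a b ↔ a = b ∨ lexLt (tw u a) (tw u b) := Iff.rfl

theorem lexLt_irrefl {r : ℕ} (x : Fin r → ℤ) : ¬ lexLt x x := by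
  rintro ⟨j, -, hj⟩; exact lt_irrefl _ hj

theorem lexLt_trans {r : ℕ} {x y z : Fin r → ℤ} (h1 : lexLt x y) (h2 : lexLt y z) :
    lexLt x z := by
  obtain ⟨j, hj, hj'⟩ := h1
  obtain ⟨k, hk, hk'⟩ := h2
  rcases lt_trichotomy j k with h | h | h
  · exact ⟨j, fun i hi => (hj i hi).trans (hk i (hi.trans h)), lt_of_lt_of_eq hj' (hk j h)⟩
  · subst h; exact ⟨j, fun i hi => (hj i hi).trans (hk i hi), hj'.trans hk'⟩
  · exact ⟨k, fun i hi => (hj i (hi.trans h)).trans (hk i hi), lt_of_eq_of_lt (hj k h) hk'⟩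

theorem lexLt_asymm {r : ℕ} {x y : Fin r → ℤ} (h1 : lexLt x y) (h2 : lexLt y x) : False :=
  lexLt_irrefl x (lexLt_trans h1 h2)

theorem lexLt_total {r : ℕ} {x y : Fin r → ℤ} (h : x ≠ y) : lexLt x y ∨ lexLt y x := by
  classical
  have hne : ∃ i, x i ≠ y i := by
    by_contra hc; push_neg at hc; exact h (funext hc)
  set S : Finset (Fin r) := Finset.univ.filter (fun i => x i ≠ y i) with hSdef
  have hS : S.Nonempty := ⟨hne.choose, by simp [hSdef, hne.choose_spec]⟩
  have hjS : S.min' hS ∈ S := S.min'_mem hS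
  have hjne : x (S.min' hS) ≠ y (S.min' hS) := by simpa [hSdef] using hjS
  have hmin : ∀ i, i < S.min' hS → x i = y i := by
    intro i hi
    by_contra hc
    exact absurd (S.min'_le i (by simp [hSdef, hc])) (not_le.2 hi)
  rcases lt_or_gt_of_ne hjne with h' | h'
  · exact Or.inl ⟨S.min' hS, hmin, h'⟩
  · exact Or.inr ⟨S.min' hS, fun i hi => (hmin i hi).symm, h'⟩

/-- Coordinates where the twisted values agree, agree (for sign vectors). -/
theorem coord_eq_of_tw_eq {t r : ℕ} {u : Fin r → ℤ} (hu : ∀ i, u i = 1 ∨ u i = -1)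
    {a b : Fin r → Fin t} {i : Fin r} (h : tw u a i = tw u b i) : a i = b i := by
  have hne : u i ≠ 0 := by rcases hu i with h' | h' <;> simp [h']
  have h2 := mul_left_cancel₀ hne h
  have h3 : (a i : ℤ) = (b i : ℤ) := by omega
  exact Fin.ext (by exact_mod_cast h3)

theorem tw_ne {t r : ℕ} {u : Fin r → ℤ} (hu : ∀ i, u i = 1 ∨ u i = -1)
    {a b : Fin r → Fin t} (h : a ≠ b) : tw u a ≠ tw u b := by
  intro hc
  exact h (funext fun i => coord_eq_of_tw_eq hu (congrFun hc i))

theorem uLe_trans {t r : ℕ} (u : Fin r → ℤ) (a b c : Fin r → Fin t)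
    (h1 : uLe u a b) (h2 : uLe u b c) : uLe u a c := by
  rcases h1 with rfl | h1
  · exact h2
  rcases h2 with rfl | h2
  · exact Or.inr h1
  · exact Or.inr (lexLt_trans h1 h2)

theorem uLe_total {t r : ℕ} {u : Fin r → ℤ} (hu : ∀ i, u i = 1 ∨ u i = -1)
    (a b : Fin r → Fin t) : uLe u a b ∨ uLe u b a := by
  by_cases h : a = b
  · exact Or.inl (Or.inl h)
  · rcases lexLt_total (tw_ne hu h) with h' | h'
    · exact Or.inl (Or.inr h')
    · exact Or.inr (Or.inr h')

theorem uLe_antisymm {t r : ℕ} {u : Fin r → ℤ} (a b : Fin r → Fin t)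
    (h1 : uLe u a b) (h2 : uLe u b a) : a = b := by
  rcases h1 with rfl | h1
  · rfl
  rcases h2 with rfl | h2
  · rfl
  · exact absurd h2 (fun h2 => lexLt_asymm h1 h2)

theorem piWord_perm (t r : ℕ) (u : Fin r → ℤ) :
    (piWord t r u).Perm (Finset.univ.toList (α := Fin r → Fin t)) :=
  List.mergeSort_perm _ _

theorem piWord_nodup (t r : ℕ) (u : Fin r → ℤ) : (piWord t r u).Nodup :=
  ((piWord_perm t r u).nodup_iff).2 (Finset.nodup_toList _)

theorem mem_piWord {t r : ℕ} (u : Fin r → ℤ) (a : Fin r → Fin t) : a ∈ piWord t r u := by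
  rw [(piWord_perm t r u).mem_iff]
  simp [Finset.mem_toList]

theorem piWord_sorted {t r : ℕ} {u : Fin r → ℤ} (hu : ∀ i, u i = 1 ∨ u i = -1) :
    (piWord t r u).Pairwise (uLe u) := by
  have h := List.pairwise_mergeSort (le := fun a b => decide (uLe u a b))
    (fun a b c h1 h2 => by
      simp only [decide_eq_true_eq] at *
      exact uLe_trans u a b c h1 h2)
    (fun a b => by
      simp only [Bool.or_eq_true, decide_eq_true_eq]
      exact uLe_total hu a b)
    (Finset.univ.toList (α := Fin r → Fin t))
  exact h.imp (fun hab => by simpa using hab)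

/-- Witnesses of `lexLt` are unique. -/
theorem lexLt_witness_unique {r : ℕ} {x y : Fin r → ℤ} {j k : Fin r}
    (hj1 : ∀ i, i < j → x i = y i) (hj2 : x j < y j)
    (hk1 : ∀ i, i < k → x i = y i) (hk2 : x k < y k) : j = k := by
  rcases lt_trichotomy j k with h | h | h
  · exact absurd (hk1 j h) hj2.ne
  · exact h
  · exact absurd (hj1 k h) hk2.ne

/-- The core contradiction for the upper bound. -/
theorem core {t r : ℕ} {U : Finset (Fin r → ℤ)} (hU : U.Nonempty)
    (hsign : ∀ u ∈ U, ∀ i, u i = 1 ∨ u i = -1)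
    {J : Finset (Fin r)} (hJ : ∀ j, j ∈ J ↔ ∀ u ∈ U, ∀ v ∈ U, u j = v j)
    {a b : Fin r → Fin t} (hab : a ≠ b) (hres : ∀ j ∈ J, a j = b j)
    (h : ∀ u ∈ U, lexLt (tw u a) (tw u b)) : False := by
  classical
  -- each u ∈ U has a witness; show all witnesses are the minimal differing index
  have key : ∀ u ∈ U, ∀ j : Fin r, ((∀ i, i < j → tw u a i = tw u b i) ∧ tw u a j < tw u b j) →
      ((∀ i, i < j → a i = b i) ∧ a j ≠ b j) := by
    intro u hu j ⟨h1, h2⟩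
    refine ⟨fun i hi => coord_eq_of_tw_eq (hsign u hu) (h1 i hi), ?_⟩
    intro hc
    rw [show tw u a j = tw u b j from by simp [tw, hc]] at h2
    exact lt_irrefl _ h2
  -- uniqueness of such j
  have uniq : ∀ j k : Fin r, ((∀ i, i < j → a i = b i) ∧ a j ≠ b j) →
      ((∀ i, i < k → a i = b i) ∧ a k ≠ b k) → j = k := by
    intro j k ⟨hj1, hj2⟩ ⟨hk1, hk2⟩
    rcases lt_trichotomy j k with h' | h' | h'
    · exact absurd (hk1 j h') hj2
    · exact h'
    · exact absurd (hj1 k h') hk2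
  obtain ⟨u₀, hu₀⟩ := hU
  obtain ⟨j₀, hj₀⟩ := h u₀ hu₀
  have hj₀' := key u₀ hu₀ j₀ hj₀
  -- j₀ ∉ J
  have hj₀J : j₀ ∉ J := fun hmem => hj₀'.2 (hres j₀ hmem)
  -- get u, v with different signs at j₀
  have := (hJ j₀).not.1 (by simpa using hj₀J)
  push_neg at this
  obtain ⟨u, hu, v, hv, huv⟩ := this
  obtain ⟨ju, hju⟩ := h u hu
  obtain ⟨jv, hjv⟩ := h v hv
  have hju' := key u hu ju hju
  have hjv' := key v hv jv hjv
  have e1 : ju = j₀ := uniq ju j₀ hju' hj₀'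
  have e2 : jv = j₀ := uniq jv j₀ hjv' hj₀'
  rw [e1] at hju
  rw [e2] at hjv
  -- contradiction from opposite signs
  have h1 : u j₀ * ((a j₀ : ℤ) + 1) < u j₀ * ((b j₀ : ℤ) + 1) := hju.2
  have h2 : v j₀ * ((a j₀ : ℤ) + 1) < v j₀ * ((b j₀ : ℤ) + 1) := hjv.2
  rcases hsign u hu j₀ with hs1 | hs1 <;> rcases hsign v hv j₀ with hs2 | hs2 <;>
    rw [hs1] at h1 <;> rw [hs2] at h2 <;> first
      | (exact absurd (hs1.trans hs2.symm) huv)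
      | omega

/-- Transferring the order between sign vectors that agree on `J`,
for letters that agree outside `J`. -/
theorem uLe_congr {t r : ℕ} {u v : Fin r → ℤ} (hu : ∀ i, u i = 1 ∨ u i = -1)
    {J : Finset (Fin r)} (huv : ∀ j ∈ J, u j = v j)
    {a b : Fin r → Fin t} (hout : ∀ i, i ∉ J → a i = b i)
    (h : uLe u a b) : uLe v a b := by
  rcases h with rfl | ⟨j, h1, h2⟩
  · exact Or.inl rfl
  have habj : a j ≠ b j := by
    intro hc
    have : tw u a j = tw u b j := by simp [tw, hc]
    exact absurd this (ne_of_lt h2)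
  have hjJ : j ∈ J := by
    by_contra hc
    exact habj (hout j hc)
  refine Or.inr ⟨j, fun i hi => ?_, ?_⟩
  · have : a i = b i := coord_eq_of_tw_eq hu (h1 i hi)
    simp [tw, this]
  · have := huv j hjJ
    show v j * ((a j : ℤ) + 1) < v j * ((b j : ℤ) + 1)
    rw [← this]
    exact h2

end Stmt11Aux

open Stmt11Aux in
/-- Let `t, r ≥ 1`, let `U` be a nonempty set of sign vectors in `{+1,-1}^r`, and let `J`
be the set of coordinates on which all vectors of `U` agree. Then the longest common
subsequence of the family `{π(u) : u ∈ U}` has length exactly `t^{|J|}`. -/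
theorem stmt11 (t r : ℕ) (ht : 1 ≤ t) (hr : 1 ≤ r)
    (U : Finset (Fin r → ℤ)) (hU : U.Nonempty)
    (hsign : ∀ u ∈ U, ∀ i, u i = 1 ∨ u i = -1)
    (J : Finset (Fin r)) (hJ : ∀ j, j ∈ J ↔ ∀ u ∈ U, ∀ v ∈ U, u j = v j) :
    LCSet {w | ∃ u ∈ U, w = piWord t r u} = t ^ J.card := by
  classical
  obtain ⟨u₀, hu₀⟩ := hU
  set W : Set (List (Fin r → Fin t)) := {w | ∃ u ∈ U, w = piWord t r u} with hWdef
  -- Upper bound: any common subsequence has length ≤ t ^ J.card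
  have upper : ∀ x : List (Fin r → Fin t), (∀ w ∈ W, x.Sublist w) → x.length ≤ t ^ J.card := by
    intro x hx
    have hx₀ : x.Sublist (piWord t r u₀) := hx _ ⟨u₀, hu₀, rfl⟩
    have hnodup : x.Nodup := (piWord_nodup t r u₀).sublist hx₀
    have hpair : ∀ u ∈ U, x.Pairwise (uLe u) := fun u hu =>
      ((piWord_sorted (hsign u hu)).sublist (hx _ ⟨u, hu, rfl⟩))
    -- restriction to J is injective on x
    have hinj : ∀ a ∈ x, ∀ b ∈ x, (fun j : J => a j) = (fun j : J => b j) → a = b := by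
      intro a ha b hb hres
      by_contra hab
      have hresJ : ∀ j ∈ J, a j = b j := fun j hj => congrFun hres ⟨j, hj⟩
      obtain ⟨ia, hia⟩ := List.get_of_mem ha
      obtain ⟨ib, hib⟩ := List.get_of_mem hb
      have hne : ia ≠ ib := fun hc => hab (by rw [← hia, ← hib, hc])
      rcases hne.lt_or_gt with hlt | hlt
      · have hle : ∀ u ∈ U, uLe u a b := fun u hu => by
          rw [← hia, ← hib]
          exact (List.pairwise_iff_get.1 (hpair u hu)) ia ib hlt
        have hlex : ∀ u ∈ U, lexLt (tw u a) (tw u b) := by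
          intro u hu
          rcases hle u hu with h | h
          · exact absurd h hab
          · exact h
        exact core ⟨u₀, hu₀⟩ hsign hJ hab hresJ hlex
      · have hle : ∀ u ∈ U, uLe u b a := fun u hu => by
          rw [← hia, ← hib]
          exact (List.pairwise_iff_get.1 (hpair u hu)) ib ia hlt
        have hlex : ∀ u ∈ U, lexLt (tw u b) (tw u a) := by
          intro u hu
          rcases hle u hu with h | h
          · exact absurd h.symm hab
          · exact h
        exact core ⟨u₀, hu₀⟩ hsign hJ (Ne.symm hab)
          (fun j hj => (hresJ j hj).symm) hlex
    have hmapnodup : (x.map (fun a => (fun j : J => a j))).Nodup :=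
      hnodup.map_on hinj
    have hlen : x.length = (x.map (fun a => (fun j : J => a j))).length := by simp
    rw [hlen]
    calc (x.map (fun a => (fun j : J => a j))).length
        ≤ Fintype.card (J → Fin t) := hmapnodup.length_le_card
      _ = t ^ J.card := by
          rw [Fintype.card_fun]
          simp [Fintype.card_coe]
  -- Lower bound: explicit common subsequence of length t ^ J.card
  have d0 : Fin t := ⟨0, ht⟩
  set p : (Fin r → Fin t) → Prop := fun a => ∀ i, i ∉ J → a i = d0 with hpdef
  set y : List (Fin r → Fin t) :=
    (piWord t r u₀).filter (fun a => decide (p a)) with hydef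
  have hy_sub₀ : y.Sublist (piWord t r u₀) := List.filter_sublist
  have hy_nodup : y.Nodup := (piWord_nodup t r u₀).sublist hy_sub₀
  have hy_mem : ∀ a ∈ y, p a := by
    intro a ha
    rw [hydef, List.mem_filter] at ha
    exact of_decide_eq_true ha.2
  have hy_sorted₀ : y.Pairwise (uLe u₀) := (piWord_sorted (hsign u₀ hu₀)).sublist hy_sub₀
  have hy_common : ∀ w ∈ W, y.Sublist w := by
    rintro w ⟨u, hu, rfl⟩
    have huv : ∀ j ∈ J, u₀ j = u j := fun j hj => (hJ j).1 hj u₀ hu₀ u hu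
    have hy_sorted : y.Pairwise (uLe u) := by
      refine List.pairwise_iff_get.2 fun i j hij => ?_
      have h₀ : uLe u₀ (y.get i) (y.get j) := (List.pairwise_iff_get.1 hy_sorted₀) i j hij
      have hmi : y.get i ∈ y := y.get_mem _
      have hmj : y.get j ∈ y := y.get_mem _
      have hout : ∀ k, k ∉ J → (y.get i) k = (y.get j) k := fun k hk =>
        (hy_mem _ hmi k hk).trans (hy_mem _ hmj k hk).symm
      exact uLe_congr (hsign u₀ hu₀) huv hout h₀
    haveI : Std.Antisymm (uLe (t := t) u) :=
      ⟨fun a b h1 h2 => uLe_antisymm a b h1 h2⟩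
    exact List.sublist_of_subperm_of_pairwise
      (List.subperm_of_subset hy_nodup (fun a _ => mem_piWord u a))
      hy_sorted (piWord_sorted (hsign u hu))
  have hy_len : y.length = t ^ J.card := by
    have h1 : y.length = y.toFinset.card := (List.toFinset_card_of_nodup hy_nodup).symm
    have h2 : y.toFinset = Finset.univ.filter p := by
      ext a
      simp only [List.mem_toFinset, Finset.mem_filter, Finset.mem_univ, true_and]
      constructor
      · exact fun ha => hy_mem a ha
      · intro ha
        rw [hydef, List.mem_filter]
        exact ⟨mem_piWord u₀ a, decide_eq_true ha⟩
    have h3 : (Finset.univ.filter p).card = Fintype.card {a // p a} :=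
      (Fintype.card_subtype p).symm
    have h4 : Fintype.card {a // p a} = Fintype.card (J → Fin t) := by
      refine Fintype.card_congr ⟨fun a => fun j => a.1 j,
        fun f => ⟨fun i => if h : i ∈ J then f ⟨i, h⟩ else d0, fun i hi => dif_neg hi⟩,
        ?_, ?_⟩
      · rintro ⟨a, ha⟩
        ext i
        by_cases h : i ∈ J
        · simp [h]
        · simp [h, ha i h]
      · intro f
        ext j
        simp [j.2]
    rw [h1, h2, h3, h4, Fintype.card_fun]
    simp [Fintype.card_coe]
  -- conclude
  have hmem : t ^ J.card ∈ {L | ∃ x : List (Fin r → Fin t), (∀ w ∈ W, x.Sublist w) ∧ x.length = L} :=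
    ⟨y, hy_common, hy_len⟩
  have hub : ∀ L ∈ {L | ∃ x : List (Fin r → Fin t), (∀ w ∈ W, x.Sublist w) ∧ x.length = L},
      L ≤ t ^ J.card := by
    rintro L ⟨x, hx, rfl⟩
    exact upper x hx
  exact le_antisymm (csSup_le ⟨_, hmem⟩ hub) (le_csSup ⟨_, hub⟩ hmem)
end

section
/- Fix an integer t ≥ 1, let u ∈ {+1,−1}^8, and let b be a word over the alphabet [t]^8 that is a subsequence of π(u). Then for every x ∈ {1,…,8}, |E_x(b)| ≤ t^x, where E_x(b) := { z ∈ {1,…,|b|−1} : the projection of b⟨z⟩ to the first x coordinates differs from the projection of b⟨z+1⟩ to the first x coordinates }. -/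
section Aux

theorem lexLt_trans {r : ℕ} {x y z : Fin r → ℤ} (h1 : lexLt x y) (h2 : lexLt y z) :
    lexLt x z := by
  obtain ⟨N₁, e1, l1⟩ := h1
  obtain ⟨N₂, e2, l2⟩ := h2
  rcases lt_trichotomy N₁ N₂ with H | rfl | H
  · exact ⟨N₁, fun j hj => (e1 j hj).trans (e2 j (hj.trans H)),
      lt_of_lt_of_eq l1 (e2 _ H)⟩
  · exact ⟨N₁, fun j hj => (e1 j hj).trans (e2 j hj), l1.trans l2⟩
  · exact ⟨N₂, fun j hj => (e1 j (hj.trans H)).trans (e2 j hj),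
      lt_of_eq_of_lt (e1 _ H) l2⟩

theorem lexLt_irrefl {r : ℕ} (x : Fin r → ℤ) : ¬ lexLt x x := by
  rintro ⟨j, _, hj⟩
  exact lt_irrefl _ hj

variable {t r : ℕ} {u : Fin r → ℤ}

theorem uLe_cancel (hu : ∀ i, u i ≠ 0) (i : Fin r) (p q : Fin t)
    (h : u i * ((p : ℤ) + 1) = u i * ((q : ℤ) + 1)) : p = q := by
  have h2 := mul_left_cancel₀ (hu i) h
  have h3 : (p : ℤ) = q := by omega
  exact Fin.ext (by exact_mod_cast h3)

theorem uLe_trans (a b c : Fin r → Fin t)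
    (hab : uLe u a b) (hbc : uLe u b c) : uLe u a c := by
  rcases hab with rfl | hab
  · exact hbc
  rcases hbc with rfl | hbc
  · exact Or.inr hab
  exact Or.inr (lexLt_trans hab hbc)

theorem uLe_total (hu : ∀ i, u i ≠ 0) (a b : Fin r → Fin t) :
    uLe u a b ∨ uLe u b a := by
  classical
  by_cases hab : a = b
  · exact Or.inl (Or.inl hab)
  · have hne : ∃ i, a i ≠ b i := Function.ne_iff.mp hab
    set S : Finset (Fin r) := Finset.univ.filter (fun i => a i ≠ b i) with hSdef
    have hS : S.Nonempty := ⟨hne.choose, by simp [hSdef, hne.choose_spec]⟩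
    set j := S.min' hS with hjdef
    have hj : a j ≠ b j := by
      have := S.min'_mem hS
      simpa [hSdef] using this
    have hlt : ∀ i, i < j → a i = b i := by
      intro i hi
      by_contra h
      exact absurd (S.min'_le i (by simp [hSdef, h])) (not_le.mpr hi)
    have heq : ∀ i : Fin r, i < j → u i * ((a i : ℤ) + 1) = u i * ((b i : ℤ) + 1) :=
      fun i hi => by rw [hlt i hi]
    have hne2 : u j * ((a j : ℤ) + 1) ≠ u j * ((b j : ℤ) + 1) :=
      fun h => hj (uLe_cancel hu j _ _ h)
    rcases lt_or_gt_of_ne hne2 with h | h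
    · exact Or.inl (Or.inr ⟨j, heq, h⟩)
    · exact Or.inr (Or.inr ⟨j, fun i hi => (heq i hi).symm, h⟩)

theorem piWord_pairwise (hu : ∀ i, u i ≠ 0) :
    (piWord t r u).Pairwise (uLe u) := by
  have h := List.pairwise_mergeSort (le := fun a b => decide (uLe u a b))
    (fun a b c hab hbc => by
      simp only [decide_eq_true_eq] at *
      exact uLe_trans a b c hab hbc)
    (fun a b => by
      simp only [Bool.or_eq_true, decide_eq_true_eq]
      exact uLe_total hu a b)
    (Finset.univ.toList (α := Fin r → Fin t))
  exact h.imp (fun h' => of_decide_eq_true h')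

end Aux

/-- Let `t ≥ 1`, let `u ∈ {+1,-1}^8`, and let `b` be a word over `[t]^8` that is a
subsequence of `π(u)`. Then for every `x ∈ {1,…,8}`, the set
`E_x(b) = {z : b⟨z⟩ and b⟨z+1⟩ differ in their first x coordinates}` has at most `t^x`
elements. -/
theorem stmt12 (t : ℕ) (ht : 1 ≤ t) (u : Fin 8 → ℤ) (hu : ∀ i, u i = 1 ∨ u i = -1)
    (b : List (Fin 8 → Fin t)) (hb : b.Sublist (piWord t 8 u))
    (x : ℕ) (hx1 : 1 ≤ x) (hx8 : x ≤ 8) :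
    Set.ncard {z : ℕ | ∃ (h : z + 1 < b.length), ∃ i : Fin 8, (i : ℕ) < x ∧
      b.get ⟨z, by omega⟩ i ≠ b.get ⟨z + 1, h⟩ i} ≤ t ^ x := by
  classical
  have hune : ∀ i, u i ≠ 0 := by
    intro i; rcases hu i with h | h <;> simp [h]
  -- the projection of the twisted vector to the first `x` coordinates
  set G : (Fin 8 → Fin t) → (Fin x → ℤ) :=
    fun a => fun i : Fin x => u (Fin.castLE hx8 i) * ((a (Fin.castLE hx8 i) : ℤ) + 1)
    with hG
  -- `G` is (weakly) monotone along the order `uLe`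
  have hGle : ∀ a c : Fin 8 → Fin t, uLe u a c → lexLt (G a) (G c) ∨ G a = G c := by
    intro a c hac
    rcases hac with rfl | ⟨j, h1, h2⟩
    · exact Or.inr rfl
    by_cases hj : (j : ℕ) < x
    · refine Or.inl ⟨⟨(j : ℕ), hj⟩, fun i hi => ?_, ?_⟩
      · exact h1 (Fin.castLE hx8 i) (by simpa [Fin.lt_def] using hi)
      · have hcj : Fin.castLE hx8 (⟨(j : ℕ), hj⟩ : Fin x) = j := Fin.ext rfl
        simpa [hG, hcj] using h2
    · refine Or.inr ?_
      funext i
      have hix : (i : ℕ) < x := i.isLt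
      exact h1 (Fin.castLE hx8 i) (show _ < j by rw [Fin.lt_def]; simp; omega)
  -- strict monotonicity when the first `x` coordinates differ
  have hGlt : ∀ a c : Fin 8 → Fin t, uLe u a c →
      (∃ i : Fin 8, (i : ℕ) < x ∧ a i ≠ c i) → lexLt (G a) (G c) := by
    intro a c hac ⟨i, hix, hne⟩
    rcases hac with rfl | ⟨j, h1, h2⟩
    · exact absurd rfl hne
    have hj : (j : ℕ) < x := by
      by_contra hj
      exact hne (uLe_cancel hune i _ _ (h1 i (show i < j by rw [Fin.lt_def]; omega)))
    refine ⟨⟨(j : ℕ), hj⟩, fun i' hi' => ?_, ?_⟩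
    · exact h1 (Fin.castLE hx8 i') (by simpa [Fin.lt_def] using hi')
    · have hcj : Fin.castLE hx8 (⟨(j : ℕ), hj⟩ : Fin x) = j := Fin.ext rfl
      simpa [hG, hcj] using h2
  -- `b` is sorted
  have hbpw : b.Pairwise (uLe u) := (piWord_pairwise hune).sublist hb
  have hget : ∀ (p q : ℕ) (hp : p < b.length) (hq : q < b.length), p < q →
      uLe u (b.get ⟨p, hp⟩) (b.get ⟨q, hq⟩) := by
    intro p q hp hq hpq
    exact List.pairwise_iff_get.mp hbpw ⟨p, hp⟩ ⟨q, hq⟩ hpq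
  have hmono : ∀ (p q : ℕ) (hp : p < b.length) (hq : q < b.length), p ≤ q →
      lexLt (G (b.get ⟨p, hp⟩)) (G (b.get ⟨q, hq⟩)) ∨
        G (b.get ⟨p, hp⟩) = G (b.get ⟨q, hq⟩) := by
    intro p q hp hq hpq
    rcases Nat.eq_or_lt_of_le hpq with rfl | h
    · exact Or.inr rfl
    · exact hGle _ _ (hget p q hp hq h)
  -- the counting map
  set d : Fin 8 → Fin t := fun _ => ⟨0, ht⟩ with hd
  set f : ℕ → (Fin x → Fin t) :=
    fun z => fun i : Fin x => (b.getD z d) (Fin.castLE hx8 i) with hf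
  have hfG : ∀ (z : ℕ) (hz : z < b.length),
      G (b.get ⟨z, hz⟩) = fun i : Fin x => u (Fin.castLE hx8 i) * ((f z i : ℤ) + 1) := by
    intro z hz
    simp only [hG, hf, List.getD_eq_getElem _ _ hz, List.get_eq_getElem]
  set E : Set ℕ := {z : ℕ | ∃ (h : z + 1 < b.length), ∃ i : Fin 8, (i : ℕ) < x ∧
      b.get ⟨z, by omega⟩ i ≠ b.get ⟨z + 1, h⟩ i} with hE
  have key : ∀ z z' : ℕ, z ∈ E → z' ∈ E → z < z' → f z ≠ f z' := by
    intro z z' hz hz' hlt hfeq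
    obtain ⟨h1, i, hix, hne⟩ := hz
    obtain ⟨h1', -⟩ := hz'
    have hz'len : z' < b.length := by omega
    have hzlen : z < b.length := by omega
    have step1 : lexLt (G (b.get ⟨z, hzlen⟩)) (G (b.get ⟨z + 1, h1⟩)) :=
      hGlt _ _ (hget z (z + 1) hzlen h1 (by omega)) ⟨i, hix, hne⟩
    have step2 := hmono (z + 1) z' h1 hz'len (by omega)
    have step3 : lexLt (G (b.get ⟨z, hzlen⟩)) (G (b.get ⟨z', hz'len⟩)) := by
      rcases step2 with h | h
      · exact lexLt_trans step1 h
      · rw [← h]; exact step1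
    have heq : G (b.get ⟨z, hzlen⟩) = G (b.get ⟨z', hz'len⟩) := by
      rw [hfG z hzlen, hfG z' hz'len, hfeq]
    rw [heq] at step3
    exact lexLt_irrefl _ step3
  have hinj : Set.InjOn f E := by
    intro z hz z' hz' hfeq
    by_contra hne
    rcases lt_or_gt_of_ne hne with h | h
    · exact key z z' hz hz' h hfeq
    · exact key z' z hz' hz h hfeq.symm
  have hcard := Set.ncard_le_ncard_of_injOn f
    (fun a _ => Set.mem_univ (f a)) hinj (Set.finite_univ)
  calc E.ncard ≤ (Set.univ : Set (Fin x → Fin t)).ncard := hcard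
    _ = t ^ x := by
        rw [Set.ncard_univ, Nat.card_eq_fintype_card, Fintype.card_fun]
        simp
end
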